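/- arXiv:1901.09183 — 10 statements merged into one kernel-verified Lean document; each statement's English description precedes it below -/
import Mathlib

section
/- Let g : Finset ℕ → ℝ be monotone and submodular with g(∅) = 0, and let R : ℕ → ℝ satisfy the decoding identity R(x) = g(B ∪ {x}) - g(B) whenever B ⊆ B_x (for a fixed family of interference sets B_x). If s ≥ 2 and i(1), …, i(s) are distinct messages with {i(1),…,i(ℓ-1)} ⊆ B_{i(ℓ)} for every ℓ ∈ [s] (i.e., the set is acyclic in the side information graph), and g(S) ≤ 1 for all S, and all R(i(ℓ)) equal a common value R, then R ≤ 1/s. -/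
/-- MAIS bound (Proposition 1), abstract form: if `{i 1, …, i s}` is acyclic
(ordered so each earlier message interferes at each later receiver) and the
common rate of its messages is `r`, then `r ≤ 1 / s`. -/
theorem mais_bound
    (g : Finset ℕ → ℝ) (R : ℕ → ℝ) (B : ℕ → Finset ℕ)
    (hmono : ∀ S S' : Finset ℕ, S ⊆ S' → g S ≤ g S')
    (hsub : ∀ S S' : Finset ℕ, g (S ∩ S') + g (S ∪ S') ≤ g S + g S')
    (hempty : g ∅ = 0)
    (hone : ∀ S : Finset ℕ, g S ≤ 1)
    (hdec : ∀ x : ℕ, ∀ T : Finset ℕ, T ⊆ B x → R x = g (insert x T) - g T)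
    (s : ℕ) (hs : 2 ≤ s) (i : ℕ → ℕ)
    (hinj : Set.InjOn i ↑(Finset.Icc 1 s))
    (hacyc : ∀ ℓ ∈ Finset.Icc 1 s, (Finset.Icc 1 (ℓ - 1)).image i ⊆ B (i ℓ))
    (r : ℝ) (hr : ∀ ℓ ∈ Finset.Icc 1 s, R (i ℓ) = r) :
    r ≤ 1 / (s : ℝ) := by
  have key : ∀ ℓ : ℕ, ℓ ≤ s → g ((Finset.Icc 1 ℓ).image i) = ℓ * r := by
    intro ℓ
    induction ℓ with
    | zero => intro _; simp [hempty]
    | succ n ih =>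
      intro hns
      have hmem : n + 1 ∈ Finset.Icc 1 s := Finset.mem_Icc.mpr ⟨Nat.succ_le_succ n.zero_le, hns⟩
      have hT : (Finset.Icc 1 n).image i ⊆ B (i (n + 1)) := by
        have := hacyc (n + 1) hmem
        simpa using this
      have hdec' := hdec (i (n + 1)) _ hT
      have hins : (Finset.Icc 1 (n + 1)).image i
          = insert (i (n + 1)) ((Finset.Icc 1 n).image i) := by
        rw [show Finset.Icc 1 (n + 1) = insert (n + 1) (Finset.Icc 1 n) from ?_,
          Finset.image_insert]
        ext x; simp [Nat.lt_succ_iff, Nat.le_succ_iff]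
        omega
      have hrn := hr (n + 1) hmem
      have ihn := ih (Nat.le_of_succ_le hns)
      rw [hins]
      have : g (insert (i (n + 1)) ((Finset.Icc 1 n).image i)) = r + n * r := by
        rw [← ihn]; linarith [hdec'.symm, hrn]
      rw [this]; push_cast; ring
  have h1 : (s : ℝ) * r ≤ 1 := by
    have := key s le_rfl
    calc (s : ℝ) * r = g ((Finset.Icc 1 s).image i) := this.symm
      _ ≤ 1 := hone _
  have hspos : (0 : ℝ) < s := by
    have : (2 : ℝ) ≤ s := by exact_mod_cast hs
    linarith
  rw [le_div_iff₀ hspos]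
  linarith
end

section
/- Every acyclic set {i(1), i(2), …, i(s)} of size s ≥ 2 in the side information graph of an index coding problem forms a singleton weighted alignment chain with one edge: the chain i(1) ↔ i(2) with tower messages i(3), …, i(s), of length m = 1 and height h₁ = s - 2. Consequently, the upper bound from the singleton weighted alignment chain theorem for this chain equals 1/s, so the singleton weighted alignment chain bound is always at least as tight as the MAIS bound: R_SW ≤ R_MAIS. -/
/-- An acyclic set of size `s`, ordered so that each message does not know any
earlier one. -/
def IsAcyclicSet (B : ℕ → Finset ℕ) (s : ℕ) (i : ℕ → ℕ) : Prop :=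
  2 ≤ s ∧ Set.InjOn i ↑(Finset.Icc 1 s) ∧
    ∀ ℓ ∈ Finset.Icc 1 s, (Finset.Icc 1 (ℓ - 1)).image i ⊆ B (i ℓ)

/-- A singleton weighted alignment chain of length `m` with tower heights `h`. -/
def IsSWChain (B : ℕ → Finset ℕ) (m : ℕ) (h : ℕ → ℕ) (i : ℕ → ℕ)
    (k : ℕ → ℕ → ℕ) : Prop :=
  1 ≤ m ∧ (i 1 ∈ B (i (m + 1)) ∨ i (m + 1) ∈ B (i 1)) ∧
    ∀ j ∈ Finset.Icc 1 m, ∀ ℓ ∈ Finset.Icc 1 (h j),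
      ({i j, i (j + 1)} ∪ (Finset.Icc 1 (ℓ - 1)).image (k j)) ⊆ B (k j ℓ)

/-- The bound associated with a singleton weighted alignment chain. -/
noncomputable def swBound (m : ℕ) (h : ℕ → ℕ) : ℝ :=
  (m : ℝ) / (1 + (m : ℝ) + ∑ j ∈ Finset.Icc 1 m, (h j : ℝ))

/-- Every acyclic set of size `s ≥ 2` forms a one-edge singleton weighted
alignment chain (ground messages `i 1, i 2`, tower messages `i 3, …, i s`) with
height `s - 2`, whose associated bound equals `1 / s`; hence the singleton
weighted alignment chain bound is at least as tight as the MAIS bound. -/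
theorem acyclic_is_sw_chain (B : ℕ → Finset ℕ) (s : ℕ) (i : ℕ → ℕ)
    (hacyc : IsAcyclicSet B s i) :
    ∃ k : ℕ → ℕ → ℕ, IsSWChain B 1 (fun _ => s - 2) i k ∧
      swBound 1 (fun _ => s - 2) = 1 / (s : ℝ) := by
  obtain ⟨hs, hinj, hB⟩ := hacyc
  refine ⟨fun _ ℓ => i (ℓ + 2), ⟨le_refl 1, ?_, ?_⟩, ?_⟩
  · left
    have h2 := hB 2 (by simp [Finset.mem_Icc]; omega)
    exact h2 (Finset.mem_image.mpr ⟨1, by simp, rfl⟩)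
  · intro j hj ℓ hℓ
    simp only [Finset.mem_Icc] at hj hℓ
    have hj1 : j = 1 := by omega
    subst hj1
    have hmem : ℓ + 2 ∈ Finset.Icc 1 s := by simp [Finset.mem_Icc]; omega
    have hB2 := hB (ℓ + 2) hmem
    intro x hx
    apply hB2
    simp only [Finset.mem_union, Finset.mem_insert, Finset.mem_singleton,
      Finset.mem_image, Finset.mem_Icc] at hx ⊢
    rcases hx with (rfl | rfl) | ⟨a, ha, rfl⟩
    · exact ⟨1, by omega, rfl⟩
    · exact ⟨2, by omega, rfl⟩
    · exact ⟨a + 2, by omega, rfl⟩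
  · simp only [swBound, Finset.Icc_self, Finset.sum_singleton]
    rw [Nat.cast_sub hs]
    norm_num
end

section
/- Let f : Finset ℕ × Finset ℕ → ℝ be a two-argument set function satisfying: monotonicity (L ⊆ L', S ⊆ S' implies f(L,S) ≤ f(L',S')), submodularity (f(L ∩ L', S ∪ S') + f(L ∪ L', S ∩ S') ≤ f(L,S) + f(L',S')), f(L, ∅) = f(∅, S) = 0, and the linking property f(U, S) = f(S, S) for all S, where U is the universal first argument. Then for any finite set K and any a, b, c ∉ K: f({a,b} ∪ K, {a,c} ∪ K) + f(U, {a,b,c}) ≥ f(U, {a,b} ∪ K) + f(U, {a,c}). -/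
/-- Lemma 6 for the distributed set function `f(L; S)`: with monotonicity,
submodularity, vanishing on empty arguments, and the linking property
`f(U, S) = f(S, S)`, one has
`f({a,b} ∪ K, {a,c} ∪ K) + f(U, {a,b,c}) ≥ f(U, {a,b} ∪ K) + f(U, {a,c})`. -/
theorem dic_linking_lemma
    (f : Finset ℕ → Finset ℕ → ℝ) (U : Finset ℕ)
    (hmono : ∀ L L' S S' : Finset ℕ, L ⊆ L' → S ⊆ S' → f L S ≤ f L' S')
    (hsub : ∀ L L' S S' : Finset ℕ,
      f (L ∩ L') (S ∪ S') + f (L ∪ L') (S ∩ S') ≤ f L S + f L' S')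
    (hzeroL : ∀ S : Finset ℕ, f ∅ S = 0)
    (hzeroS : ∀ L : Finset ℕ, f L ∅ = 0)
    (hlink : ∀ S : Finset ℕ, S ⊆ U → f U S = f S S)
    (a b c : ℕ) (K : Finset ℕ)
    (haK : a ∉ K) (hbK : b ∉ K) (hcK : c ∉ K)
    (hsubU : ({a, b, c} : Finset ℕ) ∪ K ⊆ U) :
    f ({a, b} ∪ K) ({a, c} ∪ K) + f U {a, b, c}
      ≥ f U ({a, b} ∪ K) + f U {a, c} := by
  have hTU : ({a, b} : Finset ℕ) ∪ K ⊆ U := by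
    intro x hx
    apply hsubU
    simp only [Finset.mem_union, Finset.mem_insert, Finset.mem_singleton] at hx ⊢
    tauto
  have h1 := hsub ({a, b} ∪ K) U ({a, c} ∪ K) {a, b, c}
  have e1 : ({a, b} ∪ K) ∩ U = ({a, b} : Finset ℕ) ∪ K :=
    Finset.inter_eq_left.2 hTU
  have e2 : ({a, c} ∪ K) ∪ {a, b, c} = ({a, b, c} : Finset ℕ) ∪ K := by
    ext x
    simp only [Finset.mem_union, Finset.mem_insert, Finset.mem_singleton]
    tauto
  have e3 : ({a, b} ∪ K) ∪ U = U := Finset.union_eq_right.2 hTU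
  have e4 : ({a, c} ∪ K) ∩ {a, b, c} = ({a, c} : Finset ℕ) := by
    ext x
    simp only [Finset.mem_inter, Finset.mem_union, Finset.mem_insert, Finset.mem_singleton]
    constructor
    · rintro ⟨h | hK, h2⟩
      · exact h
      · rcases h2 with rfl | rfl | rfl <;> tauto
    · rintro (rfl | rfl) <;> tauto
  rw [e1, e2, e3, e4] at h1
  have h2 : f U ({a, b} ∪ K) ≤ f ({a, b} ∪ K) ({a, b, c} ∪ K) := by
    rw [hlink _ hTU]
    apply hmono _ _ _ _ (le_refl _)
    intro x hx
    simp only [Finset.mem_union, Finset.mem_insert, Finset.mem_singleton] at hx ⊢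
    tauto
  have h3 : f ({a, b} ∪ K) ({a, c} ∪ K) + f U {a, b, c}
      ≥ f ({a, b} ∪ K) ({a, b, c} ∪ K) + f U {a, c} := h1
  linarith
end

section
/- Let f : Finset ℕ × Finset ℕ → ℝ satisfy monotonicity in both arguments, submodularity, f(∅,S) = f(L,∅) = 0, and the linking property f(U, S) = f(S, S) for a fixed universal set U ⊇ all indices. Suppose R : ℕ → ℝ satisfies the decoding identity R(x) + f(U, B) = f(U, B ∪ {x}) whenever B ⊆ B_x. Then for the basic tower with ground messages i, i' and tower messages k₁,…,k_h satisfying {i, i', k₁,…,k_{ℓ-1}} ⊆ B_{k_ℓ}: f(U, {i, i'}) + ∑_{ℓ=1}^h R(k_ℓ) ≤ f(U, {i, i', k₁, …, k_h}). -/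
/-- Lemma 5 (basic tower lemma for distributed index coding):
`f(U, {i,i'}) + ∑ R(k ℓ) ≤ f(U, {i,i'} ∪ {k 1, …, k h})`. -/
theorem basic_tower_dic
    (f : Finset ℕ → Finset ℕ → ℝ) (U : Finset ℕ)
    (R : ℕ → ℝ) (B : ℕ → Finset ℕ)
    (hmono : ∀ L L' S S' : Finset ℕ, L ⊆ L' → S ⊆ S' → f L S ≤ f L' S')
    (hsub : ∀ L L' S S' : Finset ℕ,
      f (L ∩ L') (S ∪ S') + f (L ∪ L') (S ∩ S') ≤ f L S + f L' S')
    (hzeroL : ∀ S : Finset ℕ, f ∅ S = 0)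
    (hzeroS : ∀ L : Finset ℕ, f L ∅ = 0)
    (hlink : ∀ S : Finset ℕ, S ⊆ U → f U S = f S S)
    (hdec : ∀ x : ℕ, ∀ T : Finset ℕ, T ⊆ B x → R x + f U T = f U (insert x T))
    (i i' : ℕ) (h : ℕ) (k : ℕ → ℕ)
    (htower : ∀ ℓ ∈ Finset.Icc 1 h,
      ({i, i'} ∪ (Finset.Icc 1 (ℓ - 1)).image k) ⊆ B (k ℓ)) :
    f U {i, i'} + ∑ ℓ ∈ Finset.Icc 1 h, R (k ℓ)
      ≤ f U ({i, i'} ∪ (Finset.Icc 1 h).image k) := by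
  have key : ∀ m : ℕ, (∀ ℓ ∈ Finset.Icc 1 m,
      ({i, i'} ∪ (Finset.Icc 1 (ℓ - 1)).image k) ⊆ B (k ℓ)) →
      f U {i, i'} + ∑ ℓ ∈ Finset.Icc 1 m, R (k ℓ)
        = f U ({i, i'} ∪ (Finset.Icc 1 m).image k) := by
    intro m
    induction m with
    | zero => intro _; simp
    | succ n ih =>
      intro ht
      have hIcc : Finset.Icc 1 (n + 1) = insert (n + 1) (Finset.Icc 1 n) := by
        ext x; simp [Finset.mem_Icc]; omega
      have hmem : n + 1 ∉ Finset.Icc 1 n := by simp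
      have hsum : ∑ ℓ ∈ Finset.Icc 1 (n + 1), R (k ℓ)
          = R (k (n + 1)) + ∑ ℓ ∈ Finset.Icc 1 n, R (k ℓ) := by
        rw [hIcc, Finset.sum_insert hmem]
      have hB := ht (n + 1) (by simp)
      simp only [Nat.add_sub_cancel] at hB
      have := hdec (k (n + 1)) _ hB
      have himg : insert (k (n + 1)) ({i, i'} ∪ (Finset.Icc 1 n).image k)
          = {i, i'} ∪ (Finset.Icc 1 (n + 1)).image k := by
        rw [hIcc, Finset.image_insert]
        ext x; simp
      rw [hsum, ← add_assoc, add_comm (f U {i, i'}) (R (k (n+1))), add_assoc,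
        ih (fun ℓ hℓ => ht ℓ (Finset.Icc_subset_Icc_right (by omega) hℓ)),
        this, himg]
  exact le_of_eq (key h htower)
end

section
/- Let g : Finset ℕ → ℝ be monotone and submodular with g(∅) = 0 and g(S) ≤ 1, and R(x) + g(B) = g(B ∪ {x}) for B ⊆ B_x. In the crossing tower core, for each ℓ ∈ [2:h], the inequality g(K_{[ℓ-2]} ∪ {i(s_{ℓ-1}), i(t_{ℓ-1})}) + R(k_{ℓ-1}) ≤ g(K_{[ℓ-1]} ∪ {i(s_ℓ), i(t_ℓ)}) − g({i(s_ℓ), i(t_ℓ)}) + g({i(s_ℓ), i(t_ℓ), i(s_{ℓ-1}), i(t_{ℓ-1})}) holds, where K_{[m]} = {k₁, …, k_m}, provided {K_{[ℓ-2]}, i(s_{ℓ-1}), i(t_{ℓ-1})} ⊆ B_{k_{ℓ-1}}. -/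
/-- Core chaining step (inequality (21) in the proof of Lemma 8): with
`K m = {k 1, …, k m}` and `p, q` (resp. `p', q'`) the coverage endpoints
`i(s_ℓ), i(t_ℓ)` (resp. `i(s_{ℓ-1}), i(t_{ℓ-1})`),
`g(K (ℓ-2) ∪ {p', q'}) + R(k (ℓ-1))
  ≤ g(K (ℓ-1) ∪ {p, q}) − g {p, q} + g {p, q, p', q'}`. -/
theorem core_chaining_step
    (g : Finset ℕ → ℝ) (R : ℕ → ℝ) (B : ℕ → Finset ℕ)
    (hmono : ∀ S S' : Finset ℕ, S ⊆ S' → g S ≤ g S')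
    (hsub : ∀ S S' : Finset ℕ, g (S ∩ S') + g (S ∪ S') ≤ g S + g S')
    (hempty : g ∅ = 0)
    (hone : ∀ S : Finset ℕ, g S ≤ 1)
    (hdec : ∀ x : ℕ, ∀ T : Finset ℕ, T ⊆ B x → R x + g T = g (insert x T))
    (k : ℕ → ℕ) (ℓ : ℕ) (hℓ : 2 ≤ ℓ)
    (p q p' q' : ℕ)
    (hint : ((Finset.Icc 1 (ℓ - 2)).image k ∪ {p', q'}) ⊆ B (k (ℓ - 1))) :
    g ((Finset.Icc 1 (ℓ - 2)).image k ∪ {p', q'}) + R (k (ℓ - 1))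
      ≤ g ((Finset.Icc 1 (ℓ - 1)).image k ∪ {p, q}) - g {p, q}
        + g {p, q, p', q'} := by
  set T := (Finset.Icc 1 (ℓ - 2)).image k ∪ ({p', q'} : Finset ℕ)
  set A := (Finset.Icc 1 (ℓ - 1)).image k ∪ ({p, q} : Finset ℕ)
  set C := ({p, q, p', q'} : Finset ℕ)
  have hdecT : g T + R (k (ℓ - 1)) = g (insert (k (ℓ - 1)) T) := by
    rw [add_comm]; exact hdec _ T hint
  rw [hdecT]
  have hsubAC := hsub A C
  have h1 : insert (k (ℓ - 1)) T ⊆ A ∪ C := by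
    intro x hx
    rcases Finset.mem_insert.mp hx with h | h
    · apply Finset.mem_union_left
      apply Finset.mem_union_left
      rw [h]
      have : ℓ - 1 ∈ Finset.Icc 1 (ℓ - 1) := by
        rw [Finset.mem_Icc]; omega
      exact Finset.mem_image_of_mem k this
    · rcases Finset.mem_union.mp h with h | h
      · apply Finset.mem_union_left
        apply Finset.mem_union_left
        obtain ⟨m, hm, rfl⟩ := Finset.mem_image.mp h
        refine Finset.mem_image_of_mem k ?_
        rw [Finset.mem_Icc] at hm ⊢
        exact ⟨hm.1, hm.2.trans (Nat.sub_le_sub_left (by norm_num) ℓ)⟩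
      · apply Finset.mem_union_right
        simp only [C, Finset.mem_insert, Finset.mem_singleton] at h ⊢
        tauto
  have h2 : ({p, q} : Finset ℕ) ⊆ A ∩ C := by
    intro x hx
    rw [Finset.mem_inter]
    constructor
    · exact Finset.mem_union_right _ hx
    · simp only [C, Finset.mem_insert, Finset.mem_singleton] at hx ⊢
      tauto
  have := hmono _ _ h1
  have := hmono _ _ h2
  linarith
end

section
/- Let g : Finset ℕ → ℝ be monotone, submodular, g(∅)=0, g ≤ 1, with decoding identity R(x) + g(B) = g(B ∪ {x}) for B ⊆ B_x. For a disjoint weighted alignment chain of length m with index set I of i-messages (|I| = m+1), multiset K of k-messages of total size ∑_{j∈[m]} h_j, consisting of crossing towers X_j, j ∈ M with disjoint total coverages G_j and basic towers on the remaining edges M' = [m] \ ∪_{j∈M} G_j, and with terminal condition R(i(1)) + R(i(m+1)) = g({i(1), i(m+1)}): any achievable symmetric rate R satisfies R ≤ m / (1 + m + ∑_{j∈[m]} h_j). -/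
/-- Theorem 2 (disjoint weighted alignment chain bound): for a disjoint
weighted alignment chain of length `m` made of crossing towers with mutually
disjoint total coverages and basic towers elsewhere, any achievable symmetric
rate satisfies `R ≤ m / (1 + m + ∑ h j)`. -/
theorem disjoint_weighted_alignment_chain
    (g : Finset ℕ → ℝ) (Rf : ℕ → ℝ) (R : ℝ) (B : ℕ → Finset ℕ)
    (hmono : ∀ S S' : Finset ℕ, S ⊆ S' → g S ≤ g S')
    (hsub : ∀ S S' : Finset ℕ, g (S ∩ S') + g (S ∪ S') ≤ g S + g S')
    (hempty : g ∅ = 0)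
    (hone : ∀ S : Finset ℕ, g S ≤ 1)
    (hdec : ∀ x : ℕ, ∀ T : Finset ℕ, T ⊆ B x → Rf x + g T = g (insert x T))
    (m : ℕ) (hm : 1 ≤ m)
    (i : ℕ → ℕ) (h : ℕ → ℕ) (k : ℕ → ℕ → ℕ)
    (M : Finset ℕ) (hM : M ⊆ Finset.Icc 1 m)
    (sc tc : ℕ → ℕ → ℕ)
    -- crossing tower conditions for central edges j ∈ M
    (hsc1 : ∀ j ∈ M, sc j 1 = j)
    (htc1 : ∀ j ∈ M, tc j 1 = j + 1)
    (hscbd : ∀ j ∈ M, 1 ≤ sc j (h j))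
    (htcbd : ∀ j ∈ M, tc j (h j) ≤ m + 1)
    (hmemG : ∀ j ∈ M, sc j (h j) ≤ j ∧ j + 1 ≤ tc j (h j))
    (hG2 : ∀ j ∈ M, sc j (h j) + 1 < tc j (h j))  -- |G_j| ≥ 2
    (hnest : ∀ j ∈ M, ∀ ℓ ∈ Finset.Icc 1 (h j), ∀ ℓ' ∈ Finset.Icc 1 (h j),
      ℓ ≤ ℓ' → sc j ℓ' ≤ sc j ℓ ∧ tc j ℓ ≤ tc j ℓ')
    (hcoreK : ∀ j ∈ M, ∀ ℓ ∈ Finset.Icc 1 (h j),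
      (Finset.Icc 1 (ℓ - 1)).image (k j) ⊆ B (k j ℓ))
    (hcover : ∀ j ∈ M, ∀ ℓ ∈ Finset.Icc 1 (h j),
      i (sc j ℓ) ∈ B (k j ℓ) ∧ i (tc j ℓ) ∈ B (k j ℓ))
    (hXbasic : ∀ j ∈ M, ∀ j' ∈ Finset.Icc (sc j (h j)) (tc j (h j) - 1),
      j' ≠ j → ∀ ℓ ∈ Finset.Icc 1 (h j'),
        ({i j', i (j' + 1)} ∪ (Finset.Icc 1 (ℓ - 1)).image (k j')) ⊆ B (k j' ℓ))
    -- the total coverages of different crossing towers are disjoint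
    (hdisj : ∀ j₁ ∈ M, ∀ j₂ ∈ M, j₁ ≠ j₂ →
      Disjoint (Finset.Icc (sc j₁ (h j₁)) (tc j₁ (h j₁) - 1))
               (Finset.Icc (sc j₂ (h j₂)) (tc j₂ (h j₂) - 1)))
    -- basic towers on the remaining edges M'
    (hM'basic : ∀ j' ∈ (Finset.Icc 1 m) \
        (M.biUnion fun j => Finset.Icc (sc j (h j)) (tc j (h j) - 1)),
      ∀ ℓ ∈ Finset.Icc 1 (h j'),
        ({i j', i (j' + 1)} ∪ (Finset.Icc 1 (ℓ - 1)).image (k j')) ⊆ B (k j' ℓ))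
    -- terminal condition
    (hterm : Rf (i 1) + Rf (i (m + 1)) = g {i 1, i (m + 1)})
    -- the chain i-messages mutually interfere
    (hchain : ∀ p ∈ Finset.Icc 1 (m + 1), ∀ q ∈ Finset.Icc 1 (m + 1),
      p ≠ q → i q ∈ B (i p))
    -- all chain messages achieve the common symmetric rate R
    (hsymi : ∀ j ∈ Finset.Icc 1 (m + 1), Rf (i j) = R)
    (hsymk : ∀ j ∈ Finset.Icc 1 m, ∀ ℓ ∈ Finset.Icc 1 (h j), Rf (k j ℓ) = R) :
    R ≤ (m : ℝ) / (1 + (m : ℝ) + ∑ j ∈ Finset.Icc 1 m, (h j : ℝ)) := by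
  classical
  -- singleton values
  have hiR : ∀ a, 1 ≤ a → a ≤ m + 1 → g {i a} = R := by
    intro a h1 h2
    have hd := hdec (i a) ∅ (Finset.empty_subset _)
    have hs := hsymi a (Finset.mem_Icc.mpr ⟨h1, h2⟩)
    rw [hempty, hs] at hd
    simpa using hd.symm
  have hR0 : 0 ≤ R := by
    have h1 := hiR 1 le_rfl (by omega)
    have h2 : g ∅ ≤ g {i 1} := hmono _ _ (Finset.empty_subset _)
    rw [hempty] at h2; linarith
  have hR1 : R ≤ 1 := by
    have h1 := hiR 1 le_rfl (by omega)
    have := hone {i 1}; linarith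
  have hpair : ∀ a b, 1 ≤ a → a ≤ m + 1 → 1 ≤ b → b ≤ m + 1 → a ≠ b →
      g {i a, i b} = 2 * R := by
    intro a b ha1 ha2 hb1 hb2 hab
    have hmem : i b ∈ B (i a) :=
      hchain a (Finset.mem_Icc.mpr ⟨ha1, ha2⟩) b (Finset.mem_Icc.mpr ⟨hb1, hb2⟩) hab
    have hd := hdec (i a) {i b} (Finset.singleton_subset_iff.mpr hmem)
    rw [hiR b hb1 hb2, hsymi a (Finset.mem_Icc.mpr ⟨ha1, ha2⟩)] at hd
    have : g (insert (i a) {i b}) = g {i a, i b} := rfl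
    linarith [hd, this]
  -- adding a chain point to a set containing another chain point costs at most R
  have add_pt : ∀ (S : Finset ℕ) (u v : ℕ), 1 ≤ u → u ≤ m + 1 → 1 ≤ v → v ≤ m + 1 →
      u ≠ v → i u ∈ S → g (insert (i v) S) ≤ g S + R := by
    intro S u v hu1 hu2 hv1 hv2 huv hiu
    have h1 := hsub S {i u, i v}
    have h2 : g (insert (i v) S) ≤ g (S ∪ {i u, i v}) := by
      apply hmono
      intro x hx
      rcases Finset.mem_insert.mp hx with hx | hx
      · exact Finset.mem_union_right _ (by simp [hx])
      · exact Finset.mem_union_left _ hx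
    have h3 : g {i u} ≤ g (S ∩ {i u, i v}) := by
      apply hmono
      simp only [Finset.singleton_subset_iff, Finset.mem_inter]
      exact ⟨hiu, Finset.mem_insert_self _ _⟩
    rw [hpair u v hu1 hu2 hv1 hv2 huv] at h1
    rw [hiR u hu1 hu2] at h3
    linarith
  -- walking the anchor of an inserted chain point upward / downward
  have walkup : ∀ (A : Finset ℕ) (n a : ℕ), 1 ≤ a → a + n ≤ m + 1 →
      g (insert (i (a + n)) A) ≤ g (insert (i a) A) + (n : ℝ) * R := by
    intro A n
    induction n with
    | zero => intro a _ _; simp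
    | succ n ih =>
      intro a h1 h2
      have hstep : g (insert (i (a + n + 1)) (insert (i (a + n)) A)) ≤
          g (insert (i (a + n)) A) + R :=
        add_pt _ (a + n) (a + n + 1) (by omega) (by omega) (by omega) (by omega)
          (by omega) (Finset.mem_insert_self _ _)
      have hmon : g (insert (i (a + n + 1)) A) ≤
          g (insert (i (a + n + 1)) (insert (i (a + n)) A)) :=
        hmono _ _ (Finset.insert_subset_insert _ (Finset.subset_insert _ _))
      have hih := ih a h1 (by omega)
      have heq : a + (n + 1) = a + n + 1 := rfl
      rw [heq]
      push_cast
      linarith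
  have walkdown : ∀ (A : Finset ℕ) (n a : ℕ), 1 ≤ a → a + n ≤ m + 1 →
      g (insert (i a) A) ≤ g (insert (i (a + n)) A) + (n : ℝ) * R := by
    intro A n
    induction n with
    | zero => intro a _ _; simp
    | succ n ih =>
      intro a h1 h2
      have hstep : g (insert (i (a + n)) (insert (i (a + n + 1)) A)) ≤
          g (insert (i (a + n + 1)) A) + R :=
        add_pt _ (a + n + 1) (a + n) (by omega) (by omega) (by omega) (by omega)
          (by omega) (Finset.mem_insert_self _ _)
      have hmon : g (insert (i (a + n)) A) ≤
          g (insert (i (a + n)) (insert (i (a + n + 1)) A)) :=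
        hmono _ _ (Finset.insert_subset_insert _ (Finset.subset_insert _ _))
      have hih := ih a h1 (by omega)
      have heq : a + (n + 1) = a + n + 1 := rfl
      rw [heq]
      push_cast
      linarith
  -- basic tower bound
  have basic : ∀ j', 1 ≤ j' → j' ≤ m →
      (∀ ℓ ∈ Finset.Icc 1 (h j'),
        ({i j', i (j' + 1)} ∪ (Finset.Icc 1 (ℓ - 1)).image (k j')) ⊆ B (k j' ℓ)) →
      ((h j' : ℝ) + 2) * R ≤ 1 := by
    intro j' h1 h2 hB
    have key : ∀ ℓ, ℓ ≤ h j' →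
        g ({i j', i (j' + 1)} ∪ (Finset.Icc 1 ℓ).image (k j')) = (ℓ : ℝ) * R + 2 * R := by
      intro ℓ
      induction ℓ with
      | zero =>
        intro _
        have he : (Finset.Icc 1 0 : Finset ℕ) = ∅ := by
          apply Finset.Icc_eq_empty; omega
        rw [he]
        simp only [Finset.image_empty, Finset.union_empty, Nat.cast_zero]
        rw [hpair j' (j' + 1) h1 (by omega) (by omega) (by omega) (by omega)]
        ring
      | succ ℓ ih =>
        intro hle
        have hmem : ℓ + 1 ∈ Finset.Icc 1 (h j') := Finset.mem_Icc.mpr ⟨by omega, hle⟩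
        have hsubB := hB (ℓ + 1) hmem
        have hred : ℓ + 1 - 1 = ℓ := rfl
        rw [hred] at hsubB
        have hd := hdec (k j' (ℓ + 1)) _ hsubB
        have hIcc : Finset.Icc 1 (ℓ + 1) = insert (ℓ + 1) (Finset.Icc 1 ℓ) := by
          ext x; simp only [Finset.mem_Icc, Finset.mem_insert]; omega
        have hset : insert (k j' (ℓ + 1)) ({i j', i (j' + 1)} ∪ (Finset.Icc 1 ℓ).image (k j'))
            = {i j', i (j' + 1)} ∪ (Finset.Icc 1 (ℓ + 1)).image (k j') := by
          rw [hIcc, Finset.image_insert, Finset.union_insert]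
        rw [hset] at hd
        rw [hsymk j' (Finset.mem_Icc.mpr ⟨h1, h2⟩) (ℓ + 1) hmem] at hd
        rw [← hd, ih (by omega)]
        push_cast
        ring
    have hk := key (h j') le_rfl
    have hle := hone ({i j', i (j' + 1)} ∪ (Finset.Icc 1 (h j')).image (k j'))
    linarith
  -- crossing tower bound
  have crossing : ∀ j ∈ M, ((h j : ℝ) + 2) * R ≤
      1 + ((tc j (h j) : ℝ) - (sc j (h j) : ℝ) - 1) * R := by
    intro j hjM
    obtain ⟨hj1, hj2⟩ := Finset.mem_Icc.mp (hM hjM)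
    have hG2j := hG2 j hjM
    by_cases hh : h j = 0
    · rw [show ((h j : ℕ) : ℝ) = 0 by rw [hh]; norm_num]
      have hd1 : (1 : ℝ) ≤ (tc j (h j) : ℝ) - (sc j (h j) : ℝ) - 1 := by
        have : (sc j (h j) : ℝ) + 2 ≤ (tc j (h j) : ℝ) := by exact_mod_cast hG2j
        linarith
      have hmul := mul_le_mul_of_nonneg_right hd1 hR0
      linarith
    have hh1 : 1 ≤ h j := by omega
    have claim : ∀ ℓ, 1 ≤ ℓ → ℓ ≤ h j →
        ((ℓ : ℝ) + 2) * R ≤ g ((Finset.Icc 1 ℓ).image (k j) ∪ {i (sc j ℓ), i (tc j ℓ)})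
          + ((tc j ℓ : ℝ) - (sc j ℓ : ℝ) - 1) * R := by
      intro ℓ h1
      induction ℓ, h1 using Nat.le_induction with
      | base =>
        intro hle
        have hmem : 1 ∈ Finset.Icc 1 (h j) := Finset.mem_Icc.mpr ⟨le_rfl, hle⟩
        have hcov := hcover j hjM 1 hmem
        have hsubB : ({i (sc j 1), i (tc j 1)} : Finset ℕ) ⊆ B (k j 1) := by
          intro x hx
          rcases Finset.mem_insert.mp hx with hx | hx
          · exact hx ▸ hcov.1
          · exact (Finset.mem_singleton.mp hx) ▸ hcov.2
        have hd := hdec (k j 1) _ hsubB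
        have hset : insert (k j 1) ({i (sc j 1), i (tc j 1)} : Finset ℕ)
            = (Finset.Icc 1 1).image (k j) ∪ {i (sc j 1), i (tc j 1)} := by
          rw [Finset.Icc_self, Finset.image_singleton]
          ext x
          simp only [Finset.mem_insert, Finset.mem_union, Finset.mem_singleton]
        rw [hset] at hd
        rw [hsymk j (hM hjM) 1 hmem] at hd
        rw [hsc1 j hjM, htc1 j hjM] at hd ⊢
        have hp := hpair j (j + 1) hj1 (by omega) (by omega) (by omega) (by omega)
        rw [hp] at hd
        push_cast
        linarith
      | succ ℓ hℓ ih =>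
        intro hle
        have hmem : ℓ + 1 ∈ Finset.Icc 1 (h j) := Finset.mem_Icc.mpr ⟨by omega, hle⟩
        have hmemℓ : ℓ ∈ Finset.Icc 1 (h j) := Finset.mem_Icc.mpr ⟨hℓ, by omega⟩
        have hmemh : h j ∈ Finset.Icc 1 (h j) := Finset.mem_Icc.mpr ⟨hh1, le_rfl⟩
        have hmem1 : 1 ∈ Finset.Icc 1 (h j) := Finset.mem_Icc.mpr ⟨le_rfl, hh1⟩
        obtain ⟨hss, htt⟩ := hnest j hjM ℓ hmemℓ (ℓ + 1) hmem (by omega)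
        obtain ⟨hsh, hth⟩ := hnest j hjM (ℓ + 1) hmem (h j) hmemh hle
        obtain ⟨hs1ℓ, ht1ℓ⟩ := hnest j hjM 1 hmem1 ℓ hmemℓ hℓ
        have hs1 := hsc1 j hjM
        have ht1 := htc1 j hjM
        have hsbd := hscbd j hjM
        have htbd := htcbd j hjM
        have hr1 : 1 ≤ sc j (ℓ + 1) := le_trans hsbd hsh
        have hr2 : tc j (ℓ + 1) ≤ m + 1 := le_trans hth htbd
        have hr3 : sc j ℓ ≤ j := by omega
        have hr4 : j + 1 ≤ tc j ℓ := by omega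
        -- decoding step
        have hsubB : (Finset.Icc 1 ℓ).image (k j) ∪ {i (sc j (ℓ + 1)), i (tc j (ℓ + 1))}
            ⊆ B (k j (ℓ + 1)) := by
          apply Finset.union_subset
          · have hc := hcoreK j hjM (ℓ + 1) hmem
            have hred : ℓ + 1 - 1 = ℓ := rfl
            rwa [hred] at hc
          · intro x hx
            rcases Finset.mem_insert.mp hx with hx | hx
            · exact hx ▸ (hcover j hjM (ℓ + 1) hmem).1
            · exact (Finset.mem_singleton.mp hx) ▸ (hcover j hjM (ℓ + 1) hmem).2
        have hd := hdec (k j (ℓ + 1)) _ hsubB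
        have hIcc : Finset.Icc 1 (ℓ + 1) = insert (ℓ + 1) (Finset.Icc 1 ℓ) := by
          ext x; simp only [Finset.mem_Icc, Finset.mem_insert]; omega
        have hset : insert (k j (ℓ + 1))
              ((Finset.Icc 1 ℓ).image (k j) ∪ {i (sc j (ℓ + 1)), i (tc j (ℓ + 1))})
            = (Finset.Icc 1 (ℓ + 1)).image (k j) ∪ {i (sc j (ℓ + 1)), i (tc j (ℓ + 1))} := by
          rw [hIcc, Finset.image_insert, Finset.insert_union]
        rw [hset] at hd
        rw [hsymk j (hM hjM) (ℓ + 1) hmem] at hd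
        -- walk left endpoint up from sc j (ℓ+1) to sc j ℓ
        have w1 := walkup ((Finset.Icc 1 ℓ).image (k j) ∪ {i (tc j (ℓ + 1))})
          (sc j ℓ - sc j (ℓ + 1)) (sc j (ℓ + 1)) hr1 (by omega)
        rw [show sc j (ℓ + 1) + (sc j ℓ - sc j (ℓ + 1)) = sc j ℓ by omega] at w1
        rw [← Finset.union_insert, ← Finset.union_insert] at w1
        -- walk right endpoint down from tc j (ℓ+1) to tc j ℓ
        have w2 := walkdown ((Finset.Icc 1 ℓ).image (k j) ∪ {i (sc j ℓ)})
          (tc j (ℓ + 1) - tc j ℓ) (tc j ℓ) (by omega) (by omega)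
        rw [show tc j ℓ + (tc j (ℓ + 1) - tc j ℓ) = tc j (ℓ + 1) by omega] at w2
        rw [← Finset.union_insert, ← Finset.union_insert] at w2
        rw [Finset.pair_comm (i (tc j ℓ)) (i (sc j ℓ)),
          Finset.pair_comm (i (tc j (ℓ + 1))) (i (sc j ℓ))] at w2
        have ihh := ih (by omega)
        have c1 : ((sc j ℓ - sc j (ℓ + 1) : ℕ) : ℝ) = (sc j ℓ : ℝ) - (sc j (ℓ + 1) : ℝ) :=
          Nat.cast_sub hss
        have c2 : ((tc j (ℓ + 1) - tc j ℓ : ℕ) : ℝ) = (tc j (ℓ + 1) : ℝ) - (tc j ℓ : ℝ) :=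
          Nat.cast_sub htt
        rw [c1] at w1
        rw [c2] at w2
        push_cast
        linarith
    have main := claim (h j) hh1 le_rfl
    have hb := hone ((Finset.Icc 1 (h j)).image (k j) ∪ {i (sc j (h j)), i (tc j (h j))})
    linarith
  -- per-edge inequality
  have peredge : ∀ j' ∈ Finset.Icc 1 m, ((h j' : ℝ) + 2) * R ≤
      1 + (if j' ∈ M then ((tc j' (h j') : ℝ) - (sc j' (h j') : ℝ) - 1) else 0) * R := by
    intro j' hj'
    obtain ⟨h1, h2⟩ := Finset.mem_Icc.mp hj'
    by_cases hjM : j' ∈ M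
    · rw [if_pos hjM]
      exact crossing j' hjM
    · rw [if_neg hjM, zero_mul, add_zero]
      by_cases hcov' : j' ∈ M.biUnion (fun j => Finset.Icc (sc j (h j)) (tc j (h j) - 1))
      · obtain ⟨j, hjM2, hj'cov⟩ := Finset.mem_biUnion.mp hcov'
        have hne : j' ≠ j := fun e => hjM (e ▸ hjM2)
        exact basic j' h1 h2 (hXbasic j hjM2 j' hj'cov hne)
      · exact basic j' h1 h2 (hM'basic j' (Finset.mem_sdiff.mpr ⟨hj', hcov'⟩))
  have hsum := Finset.sum_le_sum peredge
  -- compute the two sums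
  have lhs_eq : ∑ j' ∈ Finset.Icc 1 m, ((h j' : ℝ) + 2) * R
      = ((∑ j' ∈ Finset.Icc 1 m, (h j' : ℝ)) + 2 * (m : ℝ)) * R := by
    rw [← Finset.sum_mul]
    congr 1
    rw [Finset.sum_add_distrib, Finset.sum_const, Nat.card_Icc]
    simp [nsmul_eq_mul]
    ring
  have rhs_eq : ∑ j' ∈ Finset.Icc 1 m,
        (1 + (if j' ∈ M then ((tc j' (h j') : ℝ) - (sc j' (h j') : ℝ) - 1) else 0) * R)
      = (m : ℝ) + (∑ j ∈ M, ((tc j (h j) : ℝ) - (sc j (h j) : ℝ) - 1)) * R := by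
    rw [Finset.sum_add_distrib, Finset.sum_const, Nat.card_Icc, ← Finset.sum_mul]
    congr 1
    · simp [nsmul_eq_mul]
    · congr 1
      rw [Finset.sum_ite_mem]
      congr 1
      exact Finset.inter_eq_right.mpr hM
  -- bound the excess sum
  have Ebound : ∑ j ∈ M, ((tc j (h j) : ℝ) - (sc j (h j) : ℝ) - 1) ≤ (m : ℝ) - 1 := by
    have hcast : ∀ j ∈ M, ((tc j (h j) : ℝ) - (sc j (h j) : ℝ) - 1)
        = ((tc j (h j) - sc j (h j) - 1 : ℕ) : ℝ) := by
      intro j hj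
      have := hG2 j hj
      have h1 : (1 : ℕ) ≤ tc j (h j) - sc j (h j) := by omega
      have h2 : sc j (h j) ≤ tc j (h j) := by omega
      rw [Nat.cast_sub h1, Nat.cast_sub h2]
      push_cast
      ring
    rw [Finset.sum_congr rfl hcast, ← Nat.cast_sum]
    have hcard_eq : ∀ j ∈ M, (Finset.Icc (sc j (h j)) (tc j (h j) - 1)).card
        = (tc j (h j) - sc j (h j) - 1) + 1 := by
      intro j hj
      have := hG2 j hj
      rw [Nat.card_Icc]
      omega
    have hsum_card : ∑ j ∈ M, (Finset.Icc (sc j (h j)) (tc j (h j) - 1)).card ≤ m := by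
      rw [← Finset.card_biUnion hdisj]
      have hsubIcc : (M.biUnion fun j => Finset.Icc (sc j (h j)) (tc j (h j) - 1))
          ⊆ Finset.Icc 1 m := by
        intro x hx
        obtain ⟨j, hj, hxj⟩ := Finset.mem_biUnion.mp hx
        obtain ⟨hx1, hx2⟩ := Finset.mem_Icc.mp hxj
        have hb1 := hscbd j hj
        have hb2 := htcbd j hj
        exact Finset.mem_Icc.mpr ⟨by omega, by omega⟩
      have := Finset.card_le_card hsubIcc
      rw [Nat.card_Icc] at this
      omega
    by_cases hM0 : M = ∅
    · subst hM0
      simp only [Finset.sum_empty, Nat.cast_zero]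
      have hm1 : (1 : ℝ) ≤ (m : ℝ) := by exact_mod_cast hm
      linarith
    · have hc1 : 1 ≤ M.card := Finset.card_pos.mpr (Finset.nonempty_of_ne_empty hM0)
      have hx : ∑ j ∈ M, (tc j (h j) - sc j (h j) - 1) + M.card ≤ m := by
        calc ∑ j ∈ M, (tc j (h j) - sc j (h j) - 1) + M.card
            = ∑ j ∈ M, ((tc j (h j) - sc j (h j) - 1) + 1) := by
              rw [Finset.sum_add_distrib, Finset.sum_const, smul_eq_mul, mul_one]
          _ = ∑ j ∈ M, (Finset.Icc (sc j (h j)) (tc j (h j) - 1)).card :=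
              Finset.sum_congr rfl (fun j hj => (hcard_eq j hj).symm)
          _ ≤ m := hsum_card
      have hx2 : ∑ j ∈ M, (tc j (h j) - sc j (h j) - 1) + 1 ≤ m := by omega
      have hr : ((∑ j ∈ M, (tc j (h j) - sc j (h j) - 1) : ℕ) : ℝ) + 1 ≤ (m : ℝ) := by
        exact_mod_cast hx2
      linarith
  -- final assembly
  have hHnn : 0 ≤ ∑ j ∈ Finset.Icc 1 m, (h j : ℝ) :=
    Finset.sum_nonneg fun _ _ => Nat.cast_nonneg _
  have hm1 : (1 : ℝ) ≤ (m : ℝ) := by exact_mod_cast hm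
  have hpos : 0 < 1 + (m : ℝ) + ∑ j ∈ Finset.Icc 1 m, (h j : ℝ) := by linarith
  rw [le_div_iff₀ hpos]
  have h1 : ((∑ j' ∈ Finset.Icc 1 m, (h j' : ℝ)) + 2 * (m : ℝ)) * R
      ≤ (m : ℝ) + (∑ j ∈ M, ((tc j (h j) : ℝ) - (sc j (h j) : ℝ) - 1)) * R := by
    rw [← lhs_eq, ← rhs_eq]
    exact hsum
  have h2 : (∑ j ∈ M, ((tc j (h j) : ℝ) - (sc j (h j) : ℝ) - 1)) * R ≤ ((m : ℝ) - 1) * R :=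
    mul_le_mul_of_nonneg_right Ebound hR0
  nlinarith [h1, h2]
end

section
/- Let g : Finset ℕ → ℝ be monotone, submodular, g(∅)=0, with decoding identity R(x) + g(B) = g(B ∪ {x}) for B ⊆ B_x, and suppose R(i(1)) + R(i(m+1)) = g({i(1), i(m+1)}). Let 1 = a₀ < a₁ < ⋯ < a_p = m+1 be a partition of the chain, so that the intervals [a_{q-1}, a_q] tile [1, m+1], and suppose each boundary point a_q (0 < q < p) satisfies the decoding identity with the accumulated left portion as interference. Then ∑_{q=1}^{p} g({i(a_{q-1}), i(a_q)}) ≥ ∑_{q=1}^{p-1} R(i(a_q)) + R(i(1)) + R(i(m+1)). -/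
/-- Boundary-chaining step in the proof of Theorem 2 (inequalities (35)–(37)):
for a partition `1 = a 0 < a 1 < ⋯ < a p = m + 1` of the chain,
`∑_{q=1}^{p} g {i (a (q-1)), i (a q)}
  ≥ ∑_{q=1}^{p-1} R (i (a q)) + R (i 1) + R (i (m+1))`. -/
theorem boundary_chaining
    (g : Finset ℕ → ℝ) (R : ℕ → ℝ) (B : ℕ → Finset ℕ)
    (hmono : ∀ S S' : Finset ℕ, S ⊆ S' → g S ≤ g S')
    (hsub : ∀ S S' : Finset ℕ, g (S ∩ S') + g (S ∪ S') ≤ g S + g S')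
    (hempty : g ∅ = 0)
    (hdec : ∀ x : ℕ, ∀ T : Finset ℕ, T ⊆ B x → R x + g T = g (insert x T))
    (m p : ℕ) (hp : 1 ≤ p) (i : ℕ → ℕ) (a : ℕ → ℕ)
    (ha0 : a 0 = 1) (hap : a p = m + 1)
    (hmono_a : ∀ q : ℕ, q < p → a q < a (q + 1))
    (hterm : R (i 1) + R (i (m + 1)) = g {i 1, i (m + 1)})
    (hbdec : ∀ q : ℕ, 1 ≤ q → q ≤ p - 1 → ∀ T : Finset ℕ,
      T ⊆ (Finset.Icc 0 (q - 1)).image (fun u => i (a u)) →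
        R (i (a q)) + g T = g (insert (i (a q)) T)) :
    ∑ q ∈ Finset.Icc 1 p, g {i (a (q - 1)), i (a q)}
      ≥ ∑ q ∈ Finset.Icc 1 (p - 1), R (i (a q)) + R (i 1) + R (i (m + 1)) := by
  set U : ℕ → Finset ℕ := fun k => (Finset.Icc 0 k).image (fun u => i (a u)) with hU
  have hmem : ∀ u k : ℕ, u ≤ k → i (a u) ∈ U k := by
    intro u k huk
    simp only [hU, Finset.mem_image]
    exact ⟨u, by simp [huk], rfl⟩
  have hUsucc : ∀ k : ℕ, U (k + 1) = insert (i (a (k + 1))) (U k) := by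
    intro k
    simp only [hU]
    rw [show Finset.Icc 0 (k + 1) = insert (k + 1) (Finset.Icc 0 k) by
      ext x; simp [Nat.lt_succ_iff]; omega]
    rw [Finset.image_insert]
  -- singleton value via boundary decoding with empty interference
  have hsingle : ∀ k : ℕ, 1 ≤ k → k ≤ p - 1 → g {i (a k)} = R (i (a k)) := by
    intro k h1 h2
    have := hbdec k h1 h2 ∅ (Finset.empty_subset _)
    simpa [hempty] using this.symm
  have key : ∀ k : ℕ, k + 1 ≤ p →
      ∑ q ∈ Finset.Icc 1 (k + 1), g {i (a (q - 1)), i (a q)}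
        ≥ ∑ q ∈ Finset.Icc 1 k, R (i (a q)) + g (U (k + 1)) := by
    intro k
    induction k with
    | zero =>
      intro _
      have hI : (Finset.Icc 0 1 : Finset ℕ) = {0, 1} := by decide
      simp only [hU, hI, Finset.image_insert, Finset.image_singleton]
      simp
    | succ n ih =>
      intro hle
      have ihh := ih (by omega)
      have hsum1 : ∑ q ∈ Finset.Icc 1 (n + 1 + 1), g {i (a (q - 1)), i (a q)}
          = ∑ q ∈ Finset.Icc 1 (n + 1), g {i (a (q - 1)), i (a q)}
            + g {i (a (n + 1)), i (a (n + 2))} := by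
        rw [Finset.sum_Icc_succ_top (by omega : 1 ≤ n + 1 + 1)]
        norm_num
      have hsum2 : ∑ q ∈ Finset.Icc 1 (n + 1), R (i (a q))
          = ∑ q ∈ Finset.Icc 1 n, R (i (a q)) + R (i (a (n + 1))) := by
        rw [Finset.sum_Icc_succ_top (by omega : 1 ≤ n + 1)]
      -- submodularity step
      have hx : i (a (n + 1)) ∈ U (n + 1) := hmem _ _ le_rfl
      have hunion : U (n + 1) ∪ {i (a (n + 1)), i (a (n + 2))} = U (n + 2) := by
        rw [hUsucc (n + 1)]
        ext x
        simp only [Finset.mem_union, Finset.mem_insert, Finset.mem_singleton]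
        constructor
        · rintro (h | h | h)
          · exact Or.inr h
          · exact Or.inr (h ▸ hx)
          · exact Or.inl h
        · rintro (h | h)
          · exact Or.inr (Or.inr h)
          · exact Or.inl h
      have hinter : {i (a (n + 1))} ⊆ U (n + 1) ∩ {i (a (n + 1)), i (a (n + 2))} := by
        rw [Finset.singleton_subset_iff, Finset.mem_inter]
        exact ⟨hx, by simp⟩
      have hsubm := hsub (U (n + 1)) {i (a (n + 1)), i (a (n + 2))}
      rw [hunion] at hsubm
      have hmono1 : g {i (a (n + 1))} ≤ g (U (n + 1) ∩ {i (a (n + 1)), i (a (n + 2))}) :=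
        hmono _ _ hinter
      have hs : g {i (a (n + 1))} = R (i (a (n + 1))) :=
        hsingle (n + 1) (by omega) (by omega)
      rw [hsum1, hsum2]
      have : g (U (n + 1)) + g {i (a (n + 1)), i (a (n + 2))}
          ≥ R (i (a (n + 1))) + g (U (n + 2)) := by linarith
      linarith
  have hkey := key (p - 1) (by omega)
  rw [show p - 1 + 1 = p by omega] at hkey
  have hpair : ({i (a 0), i (a p)} : Finset ℕ) ⊆ U p := by
    intro x hx
    simp only [Finset.mem_insert, Finset.mem_singleton] at hx
    rcases hx with h | h
    · exact h ▸ hmem 0 p (by omega)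
    · exact h ▸ hmem p p le_rfl
  have hmono2 : g {i (a 0), i (a p)} ≤ g (U p) := hmono _ _ hpair
  rw [ha0, hap] at hmono2
  rw [← hterm] at hmono2
  linarith
end

section
/- Let g : Finset ℕ → ℝ be monotone, submodular, with g(∅) = 0 and g ≤ 1, and let R : ℕ → ℝ satisfy R(x) + g(B) = g(B ∪ {x}) for all B ⊆ B_x, for the 9-message problem with interfering sets B₁={2}, B₂={1,5,8}, B₃={}, B₄={}, B₅={2,4,8}, B₆={1,3}, B₇={3,4}, B₈={2,3,5}, B₉={1,4,6}. Then 11 + g({1,2,3}) + g({1,2,4}) ≥ 6R₁ + 6R₂ + 3R₃ + 3R₄ + 4R₅ + 4R₆ + 2R₇ + 4R₈ + 4R₉. -/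
set_option maxRecDepth 8000 in
/-- Inequality (54) for the 9-message problem of Example 4:
`11 + g {1,2,3} + g {1,2,4} ≥ 6R₁ + 6R₂ + 3R₃ + 3R₄ + 4R₅ + 4R₆ + 2R₇ + 4R₈ + 4R₉`. -/
theorem nine_message_shannon
    (g : Finset ℕ → ℝ) (R : ℕ → ℝ) (B : ℕ → Finset ℕ)
    (hmono : ∀ S S' : Finset ℕ, S ⊆ S' → g S ≤ g S')
    (hsub : ∀ S S' : Finset ℕ, g (S ∩ S') + g (S ∪ S') ≤ g S + g S')
    (hempty : g ∅ = 0)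
    (hone : ∀ S : Finset ℕ, g S ≤ 1)
    (hdec : ∀ x : ℕ, ∀ T : Finset ℕ, T ⊆ B x → R x + g T = g (insert x T))
    (hB1 : B 1 = {2}) (hB2 : B 2 = {1, 5, 8}) (hB3 : B 3 = ∅) (hB4 : B 4 = ∅)
    (hB5 : B 5 = {2, 4, 8}) (hB6 : B 6 = {1, 3}) (hB7 : B 7 = {3, 4})
    (hB8 : B 8 = {2, 3, 5}) (hB9 : B 9 = {1, 4, 6}) :
    11 + g {1, 2, 3} + g {1, 2, 4} ≥
      6 * R 1 + 6 * R 2 + 3 * R 3 + 3 * R 4 + 4 * R 5 + 4 * R 6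
        + 2 * R 7 + 4 * R 8 + 4 * R 9 := by
  have h2 : R 1 + g (∅ : Finset ℕ) = g ({1} : Finset ℕ) := by
    have h := hdec 1 (∅ : Finset ℕ) (by rw [hB1]; decide)
    rwa [show insert 1 (∅ : Finset ℕ) = ({1} : Finset ℕ) by decide] at h
  have h3 : g (∅ : Finset ℕ) + g ({1, 2} : Finset ℕ) ≤ g ({1} : Finset ℕ) + g ({2} : Finset ℕ) := by
    have h := hsub ({1} : Finset ℕ) ({2} : Finset ℕ)
    rwa [show ({1} : Finset ℕ) ∩ ({2} : Finset ℕ) = (∅ : Finset ℕ) by decide, show ({1} : Finset ℕ) ∪ ({2} : Finset ℕ) = ({1, 2} : Finset ℕ) by decide] at h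
  have h4 : R 2 + g ({1} : Finset ℕ) = g ({1, 2} : Finset ℕ) := by
    have h := hdec 2 ({1} : Finset ℕ) (by rw [hB2]; decide)
    rwa [show insert 2 ({1} : Finset ℕ) = ({1, 2} : Finset ℕ) by decide] at h
  have h5 : R 3 + g (∅ : Finset ℕ) = g ({3} : Finset ℕ) := by
    have h := hdec 3 (∅ : Finset ℕ) (by rw [hB3])
    rwa [show insert 3 (∅ : Finset ℕ) = ({3} : Finset ℕ) by decide] at h
  have h6 : R 4 + g (∅ : Finset ℕ) = g ({4} : Finset ℕ) := by
    have h := hdec 4 (∅ : Finset ℕ) (by rw [hB4])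
    rwa [show insert 4 (∅ : Finset ℕ) = ({4} : Finset ℕ) by decide] at h
  have h7 : g ({1, 4} : Finset ℕ) + g ({1, 2, 4, 6} : Finset ℕ) ≤ g ({1, 2, 4} : Finset ℕ) + g ({1, 4, 6} : Finset ℕ) := by
    have h := hsub ({1, 2, 4} : Finset ℕ) ({1, 4, 6} : Finset ℕ)
    rwa [show ({1, 2, 4} : Finset ℕ) ∩ ({1, 4, 6} : Finset ℕ) = ({1, 4} : Finset ℕ) by decide, show ({1, 2, 4} : Finset ℕ) ∪ ({1, 4, 6} : Finset ℕ) = ({1, 2, 4, 6} : Finset ℕ) by decide] at h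
  have h8 : g ({1, 4} : Finset ℕ) + g ({1, 3, 4, 6} : Finset ℕ) ≤ g ({1, 3, 4} : Finset ℕ) + g ({1, 4, 6} : Finset ℕ) := by
    have h := hsub ({1, 3, 4} : Finset ℕ) ({1, 4, 6} : Finset ℕ)
    rwa [show ({1, 3, 4} : Finset ℕ) ∩ ({1, 4, 6} : Finset ℕ) = ({1, 4} : Finset ℕ) by decide, show ({1, 3, 4} : Finset ℕ) ∪ ({1, 4, 6} : Finset ℕ) = ({1, 3, 4, 6} : Finset ℕ) by decide] at h
  have h9 : g ({2} : Finset ℕ) + g ({2, 4, 5} : Finset ℕ) ≤ g ({2, 4} : Finset ℕ) + g ({2, 5} : Finset ℕ) := by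
    have h := hsub ({2, 4} : Finset ℕ) ({2, 5} : Finset ℕ)
    rwa [show ({2, 4} : Finset ℕ) ∩ ({2, 5} : Finset ℕ) = ({2} : Finset ℕ) by decide, show ({2, 4} : Finset ℕ) ∪ ({2, 5} : Finset ℕ) = ({2, 4, 5} : Finset ℕ) by decide] at h
  have h10 : g ({1, 8} : Finset ℕ) + g ({1, 2, 5, 8} : Finset ℕ) ≤ g ({1, 2, 8} : Finset ℕ) + g ({1, 5, 8} : Finset ℕ) := by
    have h := hsub ({1, 2, 8} : Finset ℕ) ({1, 5, 8} : Finset ℕ)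
    rwa [show ({1, 2, 8} : Finset ℕ) ∩ ({1, 5, 8} : Finset ℕ) = ({1, 8} : Finset ℕ) by decide, show ({1, 2, 8} : Finset ℕ) ∪ ({1, 5, 8} : Finset ℕ) = ({1, 2, 5, 8} : Finset ℕ) by decide] at h
  have h11 : g ({1} : Finset ℕ) + g ({1, 4, 5} : Finset ℕ) ≤ g ({1, 4} : Finset ℕ) + g ({1, 5} : Finset ℕ) := by
    have h := hsub ({1, 4} : Finset ℕ) ({1, 5} : Finset ℕ)
    rwa [show ({1, 4} : Finset ℕ) ∩ ({1, 5} : Finset ℕ) = ({1} : Finset ℕ) by decide, show ({1, 4} : Finset ℕ) ∪ ({1, 5} : Finset ℕ) = ({1, 4, 5} : Finset ℕ) by decide] at h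
  have h12 : g ({3, 5} : Finset ℕ) + g ({1, 2, 3, 5} : Finset ℕ) ≤ g ({1, 3, 5} : Finset ℕ) + g ({2, 3, 5} : Finset ℕ) := by
    have h := hsub ({1, 3, 5} : Finset ℕ) ({2, 3, 5} : Finset ℕ)
    rwa [show ({1, 3, 5} : Finset ℕ) ∩ ({2, 3, 5} : Finset ℕ) = ({3, 5} : Finset ℕ) by decide, show ({1, 3, 5} : Finset ℕ) ∪ ({2, 3, 5} : Finset ℕ) = ({1, 2, 3, 5} : Finset ℕ) by decide] at h
  have h13 : g ({4} : Finset ℕ) + g ({2, 4, 5} : Finset ℕ) ≤ g ({2, 4} : Finset ℕ) + g ({4, 5} : Finset ℕ) := by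
    have h := hsub ({2, 4} : Finset ℕ) ({4, 5} : Finset ℕ)
    rwa [show ({2, 4} : Finset ℕ) ∩ ({4, 5} : Finset ℕ) = ({4} : Finset ℕ) by decide, show ({2, 4} : Finset ℕ) ∪ ({4, 5} : Finset ℕ) = ({2, 4, 5} : Finset ℕ) by decide] at h
  have h14 : g ({2, 4} : Finset ℕ) + g ({2, 4, 5, 8} : Finset ℕ) ≤ g ({2, 4, 5} : Finset ℕ) + g ({2, 4, 8} : Finset ℕ) := by
    have h := hsub ({2, 4, 5} : Finset ℕ) ({2, 4, 8} : Finset ℕ)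
    rwa [show ({2, 4, 5} : Finset ℕ) ∩ ({2, 4, 8} : Finset ℕ) = ({2, 4} : Finset ℕ) by decide, show ({2, 4, 5} : Finset ℕ) ∪ ({2, 4, 8} : Finset ℕ) = ({2, 4, 5, 8} : Finset ℕ) by decide] at h
  have h15 : g ({1, 2, 6, 9} : Finset ℕ) ≤ 1 := hone _
  have h16 : g ({1, 2, 8} : Finset ℕ) ≤ g ({1, 2, 4, 8} : Finset ℕ) := hmono _ _ (by decide)
  have h17 : g ({1} : Finset ℕ) + g ({1, 3, 6} : Finset ℕ) ≤ g ({1, 3} : Finset ℕ) + g ({1, 6} : Finset ℕ) := by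
    have h := hsub ({1, 3} : Finset ℕ) ({1, 6} : Finset ℕ)
    rwa [show ({1, 3} : Finset ℕ) ∩ ({1, 6} : Finset ℕ) = ({1} : Finset ℕ) by decide, show ({1, 3} : Finset ℕ) ∪ ({1, 6} : Finset ℕ) = ({1, 3, 6} : Finset ℕ) by decide] at h
  have h18 : g ({1, 2} : Finset ℕ) + g ({1, 2, 3, 6} : Finset ℕ) ≤ g ({1, 2, 3} : Finset ℕ) + g ({1, 2, 6} : Finset ℕ) := by
    have h := hsub ({1, 2, 3} : Finset ℕ) ({1, 2, 6} : Finset ℕ)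
    rwa [show ({1, 2, 3} : Finset ℕ) ∩ ({1, 2, 6} : Finset ℕ) = ({1, 2} : Finset ℕ) by decide, show ({1, 2, 3} : Finset ℕ) ∪ ({1, 2, 6} : Finset ℕ) = ({1, 2, 3, 6} : Finset ℕ) by decide] at h
  have h19 : R 6 + g ({1, 3} : Finset ℕ) = g ({1, 3, 6} : Finset ℕ) := by
    have h := hdec 6 ({1, 3} : Finset ℕ) (by rw [hB6])
    rwa [show insert 6 ({1, 3} : Finset ℕ) = ({1, 3, 6} : Finset ℕ) by decide] at h
  have h20 : g ({1, 3, 6} : Finset ℕ) ≤ g ({1, 2, 3, 6} : Finset ℕ) := hmono _ _ (by decide)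
  have h21 : g ({4, 5} : Finset ℕ) + g ({1, 3, 4, 5} : Finset ℕ) ≤ g ({1, 4, 5} : Finset ℕ) + g ({3, 4, 5} : Finset ℕ) := by
    have h := hsub ({1, 4, 5} : Finset ℕ) ({3, 4, 5} : Finset ℕ)
    rwa [show ({1, 4, 5} : Finset ℕ) ∩ ({3, 4, 5} : Finset ℕ) = ({4, 5} : Finset ℕ) by decide, show ({1, 4, 5} : Finset ℕ) ∪ ({3, 4, 5} : Finset ℕ) = ({1, 3, 4, 5} : Finset ℕ) by decide] at h
  have h22 : g ({1, 5} : Finset ℕ) + g ({1, 2, 5, 8} : Finset ℕ) ≤ g ({1, 2, 5} : Finset ℕ) + g ({1, 5, 8} : Finset ℕ) := by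
    have h := hsub ({1, 2, 5} : Finset ℕ) ({1, 5, 8} : Finset ℕ)
    rwa [show ({1, 2, 5} : Finset ℕ) ∩ ({1, 5, 8} : Finset ℕ) = ({1, 5} : Finset ℕ) by decide, show ({1, 2, 5} : Finset ℕ) ∪ ({1, 5, 8} : Finset ℕ) = ({1, 2, 5, 8} : Finset ℕ) by decide] at h
  have h23 : g ({1, 2, 3, 4, 6, 9} : Finset ℕ) ≤ g ({1, 2, 3, 4, 6, 8, 9} : Finset ℕ) := hmono _ _ (by decide)
  have h24 : g ({1, 3, 6} : Finset ℕ) ≤ g ({1, 3, 4, 6} : Finset ℕ) := hmono _ _ (by decide)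
  have h25 : g ({3} : Finset ℕ) + g ({3, 4, 5} : Finset ℕ) ≤ g ({3, 4} : Finset ℕ) + g ({3, 5} : Finset ℕ) := by
    have h := hsub ({3, 4} : Finset ℕ) ({3, 5} : Finset ℕ)
    rwa [show ({3, 4} : Finset ℕ) ∩ ({3, 5} : Finset ℕ) = ({3} : Finset ℕ) by decide, show ({3, 4} : Finset ℕ) ∪ ({3, 5} : Finset ℕ) = ({3, 4, 5} : Finset ℕ) by decide] at h
  have h26 : R 2 + g ({1, 5, 8} : Finset ℕ) = g ({1, 2, 5, 8} : Finset ℕ) := by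
    have h := hdec 2 ({1, 5, 8} : Finset ℕ) (by rw [hB2])
    rwa [show insert 2 ({1, 5, 8} : Finset ℕ) = ({1, 2, 5, 8} : Finset ℕ) by decide] at h
  have h27 : R 7 + g ({3, 4} : Finset ℕ) = g ({3, 4, 7} : Finset ℕ) := by
    have h := hdec 7 ({3, 4} : Finset ℕ) (by rw [hB7])
    rwa [show insert 7 ({3, 4} : Finset ℕ) = ({3, 4, 7} : Finset ℕ) by decide] at h
  have h28 : g ({2, 3, 4, 5, 6, 8} : Finset ℕ) ≤ g ({2, 3, 4, 5, 6, 7, 8} : Finset ℕ) := hmono _ _ (by decide)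
  have h29 : g ({1} : Finset ℕ) + g ({1, 3, 5} : Finset ℕ) ≤ g ({1, 3} : Finset ℕ) + g ({1, 5} : Finset ℕ) := by
    have h := hsub ({1, 3} : Finset ℕ) ({1, 5} : Finset ℕ)
    rwa [show ({1, 3} : Finset ℕ) ∩ ({1, 5} : Finset ℕ) = ({1} : Finset ℕ) by decide, show ({1, 3} : Finset ℕ) ∪ ({1, 5} : Finset ℕ) = ({1, 3, 5} : Finset ℕ) by decide] at h
  have h30 : g ({3, 4, 7} : Finset ℕ) ≤ g ({3, 4, 5, 7} : Finset ℕ) := hmono _ _ (by decide)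
  have h31 : g ({1, 6, 9} : Finset ℕ) ≤ 1 := hone _
  have h32 : g ({2, 3} : Finset ℕ) + g ({1, 2, 3, 5} : Finset ℕ) ≤ g ({1, 2, 3} : Finset ℕ) + g ({2, 3, 5} : Finset ℕ) := by
    have h := hsub ({1, 2, 3} : Finset ℕ) ({2, 3, 5} : Finset ℕ)
    rwa [show ({1, 2, 3} : Finset ℕ) ∩ ({2, 3, 5} : Finset ℕ) = ({2, 3} : Finset ℕ) by decide, show ({1, 2, 3} : Finset ℕ) ∪ ({2, 3, 5} : Finset ℕ) = ({1, 2, 3, 5} : Finset ℕ) by decide] at h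
  have h33 : g ({3} : Finset ℕ) + g ({2, 3, 8} : Finset ℕ) ≤ g ({2, 3} : Finset ℕ) + g ({3, 8} : Finset ℕ) := by
    have h := hsub ({2, 3} : Finset ℕ) ({3, 8} : Finset ℕ)
    rwa [show ({2, 3} : Finset ℕ) ∩ ({3, 8} : Finset ℕ) = ({3} : Finset ℕ) by decide, show ({2, 3} : Finset ℕ) ∪ ({3, 8} : Finset ℕ) = ({2, 3, 8} : Finset ℕ) by decide] at h
  have h34 : g ({1} : Finset ℕ) + g ({1, 3, 8} : Finset ℕ) ≤ g ({1, 3} : Finset ℕ) + g ({1, 8} : Finset ℕ) := by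
    have h := hsub ({1, 3} : Finset ℕ) ({1, 8} : Finset ℕ)
    rwa [show ({1, 3} : Finset ℕ) ∩ ({1, 8} : Finset ℕ) = ({1} : Finset ℕ) by decide, show ({1, 3} : Finset ℕ) ∪ ({1, 8} : Finset ℕ) = ({1, 3, 8} : Finset ℕ) by decide] at h
  have h35 : g ({2, 3} : Finset ℕ) + g ({2, 3, 5, 8} : Finset ℕ) ≤ g ({2, 3, 5} : Finset ℕ) + g ({2, 3, 8} : Finset ℕ) := by
    have h := hsub ({2, 3, 5} : Finset ℕ) ({2, 3, 8} : Finset ℕ)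
    rwa [show ({2, 3, 5} : Finset ℕ) ∩ ({2, 3, 8} : Finset ℕ) = ({2, 3} : Finset ℕ) by decide, show ({2, 3, 5} : Finset ℕ) ∪ ({2, 3, 8} : Finset ℕ) = ({2, 3, 5, 8} : Finset ℕ) by decide] at h
  have h36 : g ({4} : Finset ℕ) + g ({3, 4, 8} : Finset ℕ) ≤ g ({3, 4} : Finset ℕ) + g ({4, 8} : Finset ℕ) := by
    have h := hsub ({3, 4} : Finset ℕ) ({4, 8} : Finset ℕ)
    rwa [show ({3, 4} : Finset ℕ) ∩ ({4, 8} : Finset ℕ) = ({4} : Finset ℕ) by decide, show ({3, 4} : Finset ℕ) ∪ ({4, 8} : Finset ℕ) = ({3, 4, 8} : Finset ℕ) by decide] at h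
  have h37 : g ({3, 8} : Finset ℕ) + g ({1, 3, 4, 8} : Finset ℕ) ≤ g ({1, 3, 8} : Finset ℕ) + g ({3, 4, 8} : Finset ℕ) := by
    have h := hsub ({1, 3, 8} : Finset ℕ) ({3, 4, 8} : Finset ℕ)
    rwa [show ({1, 3, 8} : Finset ℕ) ∩ ({3, 4, 8} : Finset ℕ) = ({3, 8} : Finset ℕ) by decide, show ({1, 3, 8} : Finset ℕ) ∪ ({3, 4, 8} : Finset ℕ) = ({1, 3, 4, 8} : Finset ℕ) by decide] at h
  have h38 : g ({1, 3, 4} : Finset ℕ) + g ({1, 2, 3, 4, 8} : Finset ℕ) ≤ g ({1, 2, 3, 4} : Finset ℕ) + g ({1, 3, 4, 8} : Finset ℕ) := by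
    have h := hsub ({1, 2, 3, 4} : Finset ℕ) ({1, 3, 4, 8} : Finset ℕ)
    rwa [show ({1, 2, 3, 4} : Finset ℕ) ∩ ({1, 3, 4, 8} : Finset ℕ) = ({1, 3, 4} : Finset ℕ) by decide, show ({1, 2, 3, 4} : Finset ℕ) ∪ ({1, 3, 4, 8} : Finset ℕ) = ({1, 2, 3, 4, 8} : Finset ℕ) by decide] at h
  have h39 : g ({1, 2, 3, 4} : Finset ℕ) + g ({1, 2, 3, 4, 5, 8} : Finset ℕ) ≤ g ({1, 2, 3, 4, 5} : Finset ℕ) + g ({1, 2, 3, 4, 8} : Finset ℕ) := by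
    have h := hsub ({1, 2, 3, 4, 5} : Finset ℕ) ({1, 2, 3, 4, 8} : Finset ℕ)
    rwa [show ({1, 2, 3, 4, 5} : Finset ℕ) ∩ ({1, 2, 3, 4, 8} : Finset ℕ) = ({1, 2, 3, 4} : Finset ℕ) by decide, show ({1, 2, 3, 4, 5} : Finset ℕ) ∪ ({1, 2, 3, 4, 8} : Finset ℕ) = ({1, 2, 3, 4, 5, 8} : Finset ℕ) by decide] at h
  have h40 : g ({2, 5} : Finset ℕ) ≤ g ({2, 3, 5} : Finset ℕ) := hmono _ _ (by decide)
  have h41 : R 8 + g ({2, 3, 5} : Finset ℕ) = g ({2, 3, 5, 8} : Finset ℕ) := by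
    have h := hdec 8 ({2, 3, 5} : Finset ℕ) (by rw [hB8])
    rwa [show insert 8 ({2, 3, 5} : Finset ℕ) = ({2, 3, 5, 8} : Finset ℕ) by decide] at h
  have h42 : g ({1, 2, 5, 8} : Finset ℕ) ≤ g ({1, 2, 3, 5, 8} : Finset ℕ) := hmono _ _ (by decide)
  have h43 : g ({4, 8} : Finset ℕ) + g ({2, 4, 5, 8} : Finset ℕ) ≤ g ({2, 4, 8} : Finset ℕ) + g ({4, 5, 8} : Finset ℕ) := by
    have h := hsub ({2, 4, 8} : Finset ℕ) ({4, 5, 8} : Finset ℕ)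
    rwa [show ({2, 4, 8} : Finset ℕ) ∩ ({4, 5, 8} : Finset ℕ) = ({4, 8} : Finset ℕ) by decide, show ({2, 4, 8} : Finset ℕ) ∪ ({4, 5, 8} : Finset ℕ) = ({2, 4, 5, 8} : Finset ℕ) by decide] at h
  have h44 : g ({4, 5, 8} : Finset ℕ) ≤ g ({1, 4, 5, 8} : Finset ℕ) := hmono _ _ (by decide)
  have h45 : R 5 + g ({2, 4, 8} : Finset ℕ) = g ({2, 4, 5, 8} : Finset ℕ) := by
    have h := hdec 5 ({2, 4, 8} : Finset ℕ) (by rw [hB5])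
    rwa [show insert 5 ({2, 4, 8} : Finset ℕ) = ({2, 4, 5, 8} : Finset ℕ) by decide] at h
  have h46 : g ({2, 3, 5, 8} : Finset ℕ) ≤ g ({2, 3, 4, 5, 8} : Finset ℕ) := hmono _ _ (by decide)
  have h47 : g ({1, 2, 3, 5, 8} : Finset ℕ) ≤ g ({1, 2, 3, 4, 5, 8} : Finset ℕ) := hmono _ _ (by decide)
  have h48 : g ({1, 2, 3, 4, 6, 8, 9} : Finset ℕ) ≤ 1 := hone _
  have h49 : g ({2, 3, 4, 5, 8} : Finset ℕ) ≤ g ({2, 3, 4, 5, 6, 8} : Finset ℕ) := hmono _ _ (by decide)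
  have h50 : g ({2, 4, 5, 8} : Finset ℕ) ≤ g ({2, 3, 4, 5, 8} : Finset ℕ) := hmono _ _ (by decide)
  have h51 : g ({3, 4, 5, 7, 8} : Finset ℕ) ≤ 1 := hone _
  have h52 : g ({1, 2, 5} : Finset ℕ) ≤ g ({1, 2, 3, 5} : Finset ℕ) := hmono _ _ (by decide)
  have h53 : g ({2, 3, 4, 5, 6, 7, 8} : Finset ℕ) ≤ 1 := hone _
  have h54 : g ({1, 2, 3, 4} : Finset ℕ) ≤ g ({1, 2, 3, 4, 6} : Finset ℕ) := hmono _ _ (by decide)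
  have h55 : g ({1, 6} : Finset ℕ) + g ({1, 4, 6, 9} : Finset ℕ) ≤ g ({1, 4, 6} : Finset ℕ) + g ({1, 6, 9} : Finset ℕ) := by
    have h := hsub ({1, 4, 6} : Finset ℕ) ({1, 6, 9} : Finset ℕ)
    rwa [show ({1, 4, 6} : Finset ℕ) ∩ ({1, 6, 9} : Finset ℕ) = ({1, 6} : Finset ℕ) by decide, show ({1, 4, 6} : Finset ℕ) ∪ ({1, 6, 9} : Finset ℕ) = ({1, 4, 6, 9} : Finset ℕ) by decide] at h
  have h56 : g ({1, 2, 6} : Finset ℕ) + g ({1, 2, 4, 6, 9} : Finset ℕ) ≤ g ({1, 2, 4, 6} : Finset ℕ) + g ({1, 2, 6, 9} : Finset ℕ) := by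
    have h := hsub ({1, 2, 4, 6} : Finset ℕ) ({1, 2, 6, 9} : Finset ℕ)
    rwa [show ({1, 2, 4, 6} : Finset ℕ) ∩ ({1, 2, 6, 9} : Finset ℕ) = ({1, 2, 6} : Finset ℕ) by decide, show ({1, 2, 4, 6} : Finset ℕ) ∪ ({1, 2, 6, 9} : Finset ℕ) = ({1, 2, 4, 6, 9} : Finset ℕ) by decide] at h
  have h57 : R 9 + g ({1, 4, 6} : Finset ℕ) = g ({1, 4, 6, 9} : Finset ℕ) := by
    have h := hdec 9 ({1, 4, 6} : Finset ℕ) (by rw [hB9])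
    rwa [show insert 9 ({1, 4, 6} : Finset ℕ) = ({1, 4, 6, 9} : Finset ℕ) by decide] at h
  have h58 : g ({1, 4, 6, 9} : Finset ℕ) ≤ g ({1, 2, 4, 6, 9} : Finset ℕ) := hmono _ _ (by decide)
  have h59 : g ({1, 2, 4, 6, 9} : Finset ℕ) ≤ g ({1, 2, 3, 4, 6, 9} : Finset ℕ) := hmono _ _ (by decide)
  have h60 : g ({1, 3, 4} : Finset ℕ) + g ({1, 2, 3, 4, 5} : Finset ℕ) ≤ g ({1, 2, 3, 4} : Finset ℕ) + g ({1, 3, 4, 5} : Finset ℕ) := by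
    have h := hsub ({1, 2, 3, 4} : Finset ℕ) ({1, 3, 4, 5} : Finset ℕ)
    rwa [show ({1, 2, 3, 4} : Finset ℕ) ∩ ({1, 3, 4, 5} : Finset ℕ) = ({1, 3, 4} : Finset ℕ) by decide, show ({1, 2, 3, 4} : Finset ℕ) ∪ ({1, 3, 4, 5} : Finset ℕ) = ({1, 2, 3, 4, 5} : Finset ℕ) by decide] at h
  have h61 : g ({1, 5} : Finset ℕ) + g ({1, 4, 5, 8} : Finset ℕ) ≤ g ({1, 4, 5} : Finset ℕ) + g ({1, 5, 8} : Finset ℕ) := by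
    have h := hsub ({1, 4, 5} : Finset ℕ) ({1, 5, 8} : Finset ℕ)
    rwa [show ({1, 4, 5} : Finset ℕ) ∩ ({1, 5, 8} : Finset ℕ) = ({1, 5} : Finset ℕ) by decide, show ({1, 4, 5} : Finset ℕ) ∪ ({1, 5, 8} : Finset ℕ) = ({1, 4, 5, 8} : Finset ℕ) by decide] at h
  have h62 : g ({3} : Finset ℕ) + g ({1, 2, 3} : Finset ℕ) ≤ g ({1, 3} : Finset ℕ) + g ({2, 3} : Finset ℕ) := by
    have h := hsub ({1, 3} : Finset ℕ) ({2, 3} : Finset ℕ)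
    rwa [show ({1, 3} : Finset ℕ) ∩ ({2, 3} : Finset ℕ) = ({3} : Finset ℕ) by decide, show ({1, 3} : Finset ℕ) ∪ ({2, 3} : Finset ℕ) = ({1, 2, 3} : Finset ℕ) by decide] at h
  have h63 : g ({2, 4} : Finset ℕ) + g ({1, 2, 4, 8} : Finset ℕ) ≤ g ({1, 2, 4} : Finset ℕ) + g ({2, 4, 8} : Finset ℕ) := by
    have h := hsub ({1, 2, 4} : Finset ℕ) ({2, 4, 8} : Finset ℕ)
    rwa [show ({1, 2, 4} : Finset ℕ) ∩ ({2, 4, 8} : Finset ℕ) = ({2, 4} : Finset ℕ) by decide, show ({1, 2, 4} : Finset ℕ) ∪ ({2, 4, 8} : Finset ℕ) = ({1, 2, 4, 8} : Finset ℕ) by decide] at h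
  have h64 : g ({4} : Finset ℕ) + g ({1, 2, 4} : Finset ℕ) ≤ g ({1, 4} : Finset ℕ) + g ({2, 4} : Finset ℕ) := by
    have h := hsub ({1, 4} : Finset ℕ) ({2, 4} : Finset ℕ)
    rwa [show ({1, 4} : Finset ℕ) ∩ ({2, 4} : Finset ℕ) = ({4} : Finset ℕ) by decide, show ({1, 4} : Finset ℕ) ∪ ({2, 4} : Finset ℕ) = ({1, 2, 4} : Finset ℕ) by decide] at h
  have h65 : g ({1, 2, 3, 4, 6} : Finset ℕ) ≤ g ({1, 2, 3, 4, 6, 9} : Finset ℕ) := hmono _ _ (by decide)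
  have h66 : g ({3, 4, 5, 7} : Finset ℕ) ≤ g ({3, 4, 5, 7, 8} : Finset ℕ) := hmono _ _ (by decide)
  linarith [hempty, h2, h3, h4, h5, h6, h7, h8, h9, h10, h11, h12, h13, h14, h15, h16, h17, h18, h19, h20, h21, h22, h23, h24, h25, h26, h27, h28, h29, h30, h31, h32, h33, h34, h35, h36, h37, h38, h39, h40, h41, h42, h43, h44, h45, h46, h47, h48, h49, h50, h51, h52, h53, h54, h55, h56, h57, h58, h59, h60, h61, h62, h63, h64, h65, h66]
end

section
/- Let g be a function from subsets of {Y, X₁,…,X₉}-indexed ground sets to ℝ arising as g(S) = (1/r)H(Y | X_{S^c}) for independent uniform messages; assume g is monotone, submodular, g(∅)=0, g≤1, satisfies the decoding identities of the 9-message problem of Example 4, and additionally satisfies the two instances of the Zhang–Yeung non-Shannon inequality: 3g({2,4}) + 3g({1,4}) + 3g({3,4}) + g({2,3}) + g({1,3}) ≥ 2g({2,3,4}) + 2g({1,3,4}) + g({1,2}) + g({1,2,4}) + g({3}) + 4g({4}), and the symmetric version with 3 and 4 swapped appropriately: 3g({2,3}) + 3g({1,3}) + 3g({3,4}) + g({2,4})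 + g({1,4}) ≥ 2g({2,3,4}) + 2g({1,3,4}) + g({1,2}) + g({1,2,3}) + g({4}) + 4g({3}). Then 14 − g({1,2,3}) − g({1,2,4}) ≥ 2R₁ + 2R₂ + 5R₃ + 5R₄ + 4R₅ + 4R₆ + 6R₇ + 4R₈ + 4R₉. -/
/-- Inequality (55) for the 9-message problem of Example 4: assuming the two
Zhang–Yeung non-Shannon instances,
`14 − g {1,2,3} − g {1,2,4} ≥ 2R₁ + 2R₂ + 5R₃ + 5R₄ + 4R₅ + 4R₆ + 6R₇ + 4R₈ + 4R₉`. -/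
theorem nine_message_nonshannon
    (g : Finset ℕ → ℝ) (R : ℕ → ℝ) (B : ℕ → Finset ℕ)
    (hmono : ∀ S S' : Finset ℕ, S ⊆ S' → g S ≤ g S')
    (hsub : ∀ S S' : Finset ℕ, g (S ∩ S') + g (S ∪ S') ≤ g S + g S')
    (hempty : g ∅ = 0)
    (hone : ∀ S : Finset ℕ, g S ≤ 1)
    (hdec : ∀ x : ℕ, ∀ T : Finset ℕ, T ⊆ B x → R x + g T = g (insert x T))
    (hB1 : B 1 = {2}) (hB2 : B 2 = {1, 5, 8}) (hB3 : B 3 = ∅) (hB4 : B 4 = ∅)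
    (hB5 : B 5 = {2, 4, 8}) (hB6 : B 6 = {1, 3}) (hB7 : B 7 = {3, 4})
    (hB8 : B 8 = {2, 3, 5}) (hB9 : B 9 = {1, 4, 6})
    (hZY1 : 3 * g {2, 4} + 3 * g {1, 4} + 3 * g {3, 4} + g {2, 3} + g {1, 3}
      ≥ 2 * g {2, 3, 4} + 2 * g {1, 3, 4} + g {1, 2} + g {1, 2, 4}
        + g {3} + 4 * g {4})
    (hZY2 : 3 * g {2, 3} + 3 * g {1, 3} + 3 * g {3, 4} + g {2, 4} + g {1, 4}
      ≥ 2 * g {2, 3, 4} + 2 * g {1, 3, 4} + g {1, 2} + g {1, 2, 3}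
        + g {4} + 4 * g {3}) :
    14 - g {1, 2, 3} - g {1, 2, 4} ≥
      2 * R 1 + 2 * R 2 + 5 * R 3 + 5 * R 4 + 4 * R 5 + 4 * R 6
        + 6 * R 7 + 4 * R 8 + 4 * R 9 := by

  -- decoding equalities
  have d1 : R 1 + g {2} = g {1, 2} := by
    have h := hdec 1 {2} (by rw [hB1])
    rwa [show (insert 1 ({2} : Finset ℕ)) = {1, 2} from by decide] at h
  have d2 : R 2 + g ∅ = g {2} := by
    have h := hdec 2 ∅ (by simp)
    rwa [show (insert 2 (∅ : Finset ℕ)) = {2} from by decide] at h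
  have d3 : R 3 + g ∅ = g {3} := by
    have h := hdec 3 ∅ (by simp)
    rwa [show (insert 3 (∅ : Finset ℕ)) = {3} from by decide] at h
  have d4 : R 4 + g ∅ = g {4} := by
    have h := hdec 4 ∅ (by simp)
    rwa [show (insert 4 (∅ : Finset ℕ)) = {4} from by decide] at h
  have d5 : R 5 + g {2, 4, 8} = g {2, 4, 5, 8} := by
    have h := hdec 5 {2, 4, 8} (by rw [hB5])
    rwa [show (insert 5 ({2, 4, 8} : Finset ℕ)) = {2, 4, 5, 8} from by decide] at h
  have d6 : R 6 + g {1, 3} = g {1, 3, 6} := by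
    have h := hdec 6 {1, 3} (by rw [hB6])
    rwa [show (insert 6 ({1, 3} : Finset ℕ)) = {1, 3, 6} from by decide] at h
  have d7 : R 7 + g {3, 4} = g {3, 4, 7} := by
    have h := hdec 7 {3, 4} (by rw [hB7])
    rwa [show (insert 7 ({3, 4} : Finset ℕ)) = {3, 4, 7} from by decide] at h
  have d8 : R 8 + g {2, 3} = g {2, 3, 8} := by
    have h := hdec 8 {2, 3} (by rw [hB8]; decide)
    rwa [show (insert 8 ({2, 3} : Finset ℕ)) = {2, 3, 8} from by decide] at h
  have d9 : R 9 + g {1, 4, 6} = g {1, 4, 6, 9} := by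
    have h := hdec 9 {1, 4, 6} (by rw [hB9])
    rwa [show (insert 9 ({1, 4, 6} : Finset ℕ)) = {1, 4, 6, 9} from by decide] at h
  -- upper bounds by 1
  have o1 : g {1, 3, 6, 9} ≤ 1 := hone _
  have o2 : g {3, 4, 6, 7} ≤ 1 := hone _
  have o3 : g {2, 4, 5, 6, 8} ≤ 1 := hone _
  have o4 : g {3, 4, 5, 7, 9} ≤ 1 := hone _
  -- monotonicity instances
  have m1 : g {3, 4, 7} ≤ g {3, 4, 6, 7, 9} := hmono _ _ (by decide)
  have m2 : g {1, 2, 3, 8} ≤ g {1, 2, 3, 4, 8} := hmono _ _ (by decide)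
  have m3 : g {1, 4, 6, 9} ≤ g {1, 3, 4, 6, 9} := hmono _ _ (by decide)
  have m4 : g {2, 4, 5, 8} ≤ g {2, 4, 5, 6, 8} := hmono _ _ (by decide)
  have m5 : g {3, 4, 7, 9} ≤ g {3, 4, 5, 7, 9} := hmono _ _ (by decide)
  -- submodularity instances
  have s1 : g {1, 4} + g {1, 3, 4, 6} ≤ g {1, 3, 4} + g {1, 4, 6} := by
    have h := hsub {1, 3, 4} {1, 4, 6}
    rwa [show ({1, 3, 4} ∩ {1, 4, 6} : Finset ℕ) = {1, 4} from by decide,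
      show ({1, 3, 4} ∪ {1, 4, 6} : Finset ℕ) = {1, 3, 4, 6} from by decide] at h
  have s2 : g {2, 4} + g {2, 3, 4, 8} ≤ g {2, 3, 4} + g {2, 4, 8} := by
    have h := hsub {2, 3, 4} {2, 4, 8}
    rwa [show ({2, 3, 4} ∩ {2, 4, 8} : Finset ℕ) = {2, 4} from by decide,
      show ({2, 3, 4} ∪ {2, 4, 8} : Finset ℕ) = {2, 3, 4, 8} from by decide] at h
  have s3 : g {2, 3, 8} + g {1, 2, 3, 4, 8} ≤ g {1, 2, 3, 8} + g {2, 3, 4, 8} := by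
    have h := hsub {1, 2, 3, 8} {2, 3, 4, 8}
    rwa [show ({1, 2, 3, 8} ∩ {2, 3, 4, 8} : Finset ℕ) = {2, 3, 8} from by decide,
      show ({1, 2, 3, 8} ∪ {2, 3, 4, 8} : Finset ℕ) = {1, 2, 3, 4, 8} from by decide] at h
  have s4 : g {1, 3, 6} + g {1, 3, 4, 6, 9} ≤ g {1, 3, 4, 6} + g {1, 3, 6, 9} := by
    have h := hsub {1, 3, 4, 6} {1, 3, 6, 9}
    rwa [show ({1, 3, 4, 6} ∩ {1, 3, 6, 9} : Finset ℕ) = {1, 3, 6} from by decide,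
      show ({1, 3, 4, 6} ∪ {1, 3, 6, 9} : Finset ℕ) = {1, 3, 4, 6, 9} from by decide] at h
  have s5 : g {3, 4, 7} + g {3, 4, 6, 7, 9} ≤ g {3, 4, 6, 7} + g {3, 4, 7, 9} := by
    have h := hsub {3, 4, 6, 7} {3, 4, 7, 9}
    rwa [show ({3, 4, 6, 7} ∩ {3, 4, 7, 9} : Finset ℕ) = {3, 4, 7} from by decide,
      show ({3, 4, 6, 7} ∪ {3, 4, 7, 9} : Finset ℕ) = {3, 4, 6, 7, 9} from by decide] at h
  linarith [hZY1, hZY2, hempty, d1, d2, d3, d4, d5, d6, d7, d8, d9,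
    o1, o2, o3, o4, m1, m2, m3, m4, m5, s1, s2, s3, s4, s5]
end

section
/- Under the hypotheses of the 9-message problem of Example 4 — g monotone, submodular, g(∅)=0, g≤1, decoding identities R_i + g(B) = g(B∪{i}) for B ⊆ B_i with B₁={2}, B₂={1,5,8}, B₅={2,4,8}, B₆={1,3}, B₇={3,4}, B₈={2,3,5}, B₉={1,4,6} — the following six auxiliary inequalities hold: g({1,3,4}) ≥ g({1,4}) + g({1,3}) + R₆ + R₉ − 1; g({2,3,4}) ≥ g({2,4}) + g({2,3}) + R₅ + R₈ − 1; g({1,3,5}) ≥ g({3,5}) + g({1,5}) + R₂ + R₈ − 1; g({1,4,8}) ≥ g({4,8}) + g({1,8}) + R₂ + R₅ − 1; g({1,2,3}) ≥ g({2,3}) + g({1,5}) + R₂ + R₈ − 1; g({1,2,4}) ≥ g({2,4}) + g({1,8}) + R₂ + R₅ − 1. -/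
/-- The six auxiliary inequalities (48)–(53) for the 9-message problem of
Example 4. -/
theorem nine_message_auxiliary
    (g : Finset ℕ → ℝ) (R : ℕ → ℝ) (B : ℕ → Finset ℕ)
    (hmono : ∀ S S' : Finset ℕ, S ⊆ S' → g S ≤ g S')
    (hsub : ∀ S S' : Finset ℕ, g (S ∩ S') + g (S ∪ S') ≤ g S + g S')
    (hempty : g ∅ = 0)
    (hone : ∀ S : Finset ℕ, g S ≤ 1)
    (hdec : ∀ x : ℕ, ∀ T : Finset ℕ, T ⊆ B x → R x + g T = g (insert x T))
    (hB1 : B 1 = {2}) (hB2 : B 2 = {1, 5, 8})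
    (hB5 : B 5 = {2, 4, 8}) (hB6 : B 6 = {1, 3}) (hB7 : B 7 = {3, 4})
    (hB8 : B 8 = {2, 3, 5}) (hB9 : B 9 = {1, 4, 6}) :
    (g {1, 3, 4} ≥ g {1, 4} + g {1, 3} + R 6 + R 9 - 1) ∧
    (g {2, 3, 4} ≥ g {2, 4} + g {2, 3} + R 5 + R 8 - 1) ∧
    (g {1, 3, 5} ≥ g {3, 5} + g {1, 5} + R 2 + R 8 - 1) ∧
    (g {1, 4, 8} ≥ g {4, 8} + g {1, 8} + R 2 + R 5 - 1) ∧
    (g {1, 2, 3} ≥ g {2, 3} + g {1, 5} + R 2 + R 8 - 1) ∧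
    (g {1, 2, 4} ≥ g {2, 4} + g {1, 8} + R 2 + R 5 - 1) := by
  -- saturation decoding identities
  have d9 : R 9 + g {1,4,6} = g {1,4,6,9} := by
    have h := hdec 9 {1,4,6} (by rw [hB9])
    rwa [show (insert 9 ({1,4,6} : Finset ℕ)) = {1,4,6,9} by decide] at h
  have d8 : R 8 + g {2,3,5} = g {2,3,5,8} := by
    have h := hdec 8 {2,3,5} (by rw [hB8])
    rwa [show (insert 8 ({2,3,5} : Finset ℕ)) = {2,3,5,8} by decide] at h
  have d2 : R 2 + g {1,5,8} = g {1,2,5,8} := by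
    have h := hdec 2 {1,5,8} (by rw [hB2])
    rwa [show (insert 2 ({1,5,8} : Finset ℕ)) = {1,2,5,8} by decide] at h
  have d5 : R 5 + g {2,4,8} = g {2,4,5,8} := by
    have h := hdec 5 {2,4,8} (by rw [hB5])
    rwa [show (insert 5 ({2,4,8} : Finset ℕ)) = {2,4,5,8} by decide] at h
  refine ⟨?_, ?_, ?_, ?_, ?_, ?_⟩
  · -- (48)
    have s := hsub {1,3,4} {1,4,6}
    have e1 := congrArg g (show ({1,3,4} : Finset ℕ) ∩ {1,4,6} = {1,4} by decide)
    have e2 := congrArg g (show ({1,3,4} : Finset ℕ) ∪ {1,4,6} = {1,3,4,6} by decide)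
    have m := hmono {1,3,6} {1,3,4,6} (by decide)
    have d6 : R 6 + g {1,3} = g {1,3,6} := by
      have h := hdec 6 {1,3} (by rw [hB6])
      rwa [show (insert 6 ({1,3} : Finset ℕ)) = {1,3,6} by decide] at h
    have o := hone {1,4,6,9}
    linarith
  · -- (49)
    have s := hsub {2,3,4} {2,3,5}
    have e1 := congrArg g (show ({2,3,4} : Finset ℕ) ∩ {2,3,5} = {2,3} by decide)
    have e2 := congrArg g (show ({2,3,4} : Finset ℕ) ∪ {2,3,5} = {2,3,4,5} by decide)
    have m := hmono {2,4,5} {2,3,4,5} (by decide)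
    have d5' : R 5 + g {2,4} = g {2,4,5} := by
      have h := hdec 5 {2,4} (by rw [hB5]; decide)
      rwa [show (insert 5 ({2,4} : Finset ℕ)) = {2,4,5} by decide] at h
    have o := hone {2,3,5,8}
    linarith
  · -- (50)
    have s := hsub {1,3,5} {1,5,8}
    have e1 := congrArg g (show ({1,3,5} : Finset ℕ) ∩ {1,5,8} = {1,5} by decide)
    have e2 := congrArg g (show ({1,3,5} : Finset ℕ) ∪ {1,5,8} = {1,3,5,8} by decide)
    have m := hmono {3,5,8} {1,3,5,8} (by decide)
    have d8' : R 8 + g {3,5} = g {3,5,8} := by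
      have h := hdec 8 {3,5} (by rw [hB8]; decide)
      rwa [show (insert 8 ({3,5} : Finset ℕ)) = {3,5,8} by decide] at h
    have o := hone {1,2,5,8}
    linarith
  · -- (51)
    have s := hsub {1,4,8} {1,5,8}
    have e1 := congrArg g (show ({1,4,8} : Finset ℕ) ∩ {1,5,8} = {1,8} by decide)
    have e2 := congrArg g (show ({1,4,8} : Finset ℕ) ∪ {1,5,8} = {1,4,5,8} by decide)
    have m := hmono {4,5,8} {1,4,5,8} (by decide)
    have d5' : R 5 + g {4,8} = g {4,5,8} := by
      have h := hdec 5 {4,8} (by rw [hB5]; decide)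
      rwa [show (insert 5 ({4,8} : Finset ℕ)) = {4,5,8} by decide] at h
    have o := hone {1,2,5,8}
    linarith
  · -- (52)
    have s := hsub {1,2,3} {2,3,5}
    have e1 := congrArg g (show ({1,2,3} : Finset ℕ) ∩ {2,3,5} = {2,3} by decide)
    have e2 := congrArg g (show ({1,2,3} : Finset ℕ) ∪ {2,3,5} = {1,2,3,5} by decide)
    have m := hmono {1,2,5} {1,2,3,5} (by decide)
    have d2' : R 2 + g {1,5} = g {1,2,5} := by
      have h := hdec 2 {1,5} (by rw [hB2]; decide)
      rwa [show (insert 2 ({1,5} : Finset ℕ)) = {1,2,5} by decide] at h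
    have o := hone {2,3,5,8}
    linarith
  · -- (53)
    have s := hsub {1,2,4} {2,4,8}
    have e1 := congrArg g (show ({1,2,4} : Finset ℕ) ∩ {2,4,8} = {2,4} by decide)
    have e2 := congrArg g (show ({1,2,4} : Finset ℕ) ∪ {2,4,8} = {1,2,4,8} by decide)
    have m := hmono {1,2,8} {1,2,4,8} (by decide)
    have d2' : R 2 + g {1,8} = g {1,2,8} := by
      have h := hdec 2 {1,8} (by rw [hB2]; decide)
      rwa [show (insert 2 ({1,8} : Finset ℕ)) = {1,2,8} by decide] at h
    have o := hone {2,4,5,8}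
    linarith
end
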